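/- arXiv:1908.11735 — 10 statements merged into one kernel-verified Lean document; each statement's English description precedes it below -/
import Mathlib

section
/- If a pure product state ⊗_{k=1}^N |ψ^k⟩ of N systems (each with state space H₁) lies in the symmetric subspace of H₁^⊗N (with N ≥ 1), then all factors are equal up to phase: there exists |ψ⟩ such that ⊗_k |ψ^k⟩ = c · |ψ⟩^⊗N for some unit scalar c. -/
open Finset

/-- The product state `⊗ₖ ψs k` of `N` single-particle states, as a function on
multi-indices (the tensor space `H₁^{⊗N}` with `H₁ = ℂ^d`). -/
def tenProd {d N : ℕ} (ψs : Fin N → Fin d → ℂ) : (Fin N → Fin d) → ℂ :=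
  fun f => ∏ k, ψs k (f k)

/-- The `N`-fold tensor power `ψ^{⊗N}`. -/
def tenPow {d N : ℕ} (ψ : Fin d → ℂ) : (Fin N → Fin d) → ℂ :=
  fun f => ∏ k, ψ (f k)

/-- A vector of `H₁^{⊗N}` lies in the symmetric subspace iff it is invariant under
all permutations of the tensor factors. -/
def IsSymmetricVec {d N : ℕ} (v : (Fin N → Fin d) → ℂ) : Prop :=
  ∀ (σ : Equiv.Perm (Fin N)) (f : Fin N → Fin d), v (f ∘ σ) = v f

/-!
Transposing the factors `j` and `k` of a symmetric product state and evaluating at a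
multi-index whose other entries are fixed at nonvanishing coordinates gives
`ψʲ(x) ψᵏ(y) = ψᵏ(x) ψʲ(y)`, so all factors are proportional to one of them, say
`ψˢ = cₛ ψ⁰`. Hence the state is `(∏ₛ cₛ) (ψ⁰)^{⊗N}`, and since `ℂ` is algebraically
closed the scalar is an `N`-th power `w^N`, giving the state `(w ψ⁰)^{⊗N}` (phase `1`).
-/

theorem Finset.prod_univ_eq_mul_mul_prod_sdiff_pair {ι M : Type*} [Fintype ι]
    [DecidableEq ι] [CommMonoid M] (g : ι → M) {j k : ι} (hjk : j ≠ k) :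
    ∏ i, g i = g j * g k * ∏ i ∈ univ \ {j, k}, g i := by
  rw [← prod_sdiff (subset_univ {j, k}), prod_pair hjk, mul_comm]

section ProductState

variable {d N : ℕ} {ψs : Fin N → Fin d → ℂ}

theorem tenProd_comp_perm (ψs : Fin N → Fin d → ℂ) (σ : Equiv.Perm (Fin N))
    (f : Fin N → Fin d) : tenProd ψs (f ∘ σ) = tenProd (ψs ∘ σ.symm) f := by
  simp only [tenProd, Function.comp_apply]
  simpa using (Equiv.prod_comp σ fun i => ψs (σ.symm i) (f i))

theorem IsSymmetricVec.mul_eq_mul (hsym : IsSymmetricVec (tenProd ψs))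
    {a : Fin N → Fin d} (ha : ∀ i, ψs i (a i) ≠ 0) (j k : Fin N) (x : Fin d) :
    ψs j x * ψs k (a k) = ψs k x * ψs j (a k) := by
  rcases eq_or_ne j k with rfl | hjk
  · rfl
  have hswap := hsym (Equiv.swap j k) (Function.update a j x)
  rw [tenProd_comp_perm, Equiv.symm_swap] at hswap
  simp only [tenProd, Function.comp_apply,
    prod_univ_eq_mul_mul_prod_sdiff_pair _ hjk, Equiv.swap_apply_left,
    Equiv.swap_apply_right, Function.update_self, Function.update_of_ne hjk.symm] at hswap
  have hrest : ∀ i ∈ univ \ {j, k}, Equiv.swap j k i = i ∧ Function.update a j x i = a i := by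
    intro i hi
    simp only [mem_sdiff, mem_univ, mem_insert, mem_singleton, not_or, true_and] at hi
    exact ⟨Equiv.swap_apply_of_ne_of_ne hi.1 hi.2, Function.update_of_ne hi.1 _ _⟩
  have hswapped : ∏ i ∈ univ \ {j, k}, ψs (Equiv.swap j k i) (Function.update a j x i)
      = ∏ i ∈ univ \ {j, k}, ψs i (a i) :=
    prod_congr rfl fun i hi => by rw [(hrest i hi).1, (hrest i hi).2]
  have hupdated : ∏ i ∈ univ \ {j, k}, ψs i (Function.update a j x i)
      = ∏ i ∈ univ \ {j, k}, ψs i (a i) :=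
    prod_congr rfl fun i hi => by rw [(hrest i hi).2]
  rw [hswapped, hupdated] at hswap
  have hrest_ne : ∏ i ∈ univ \ {j, k}, ψs i (a i) ≠ 0 := prod_ne_zero_iff.2 fun i _ => ha i
  linear_combination (mul_right_cancel₀ hrest_ne hswap).symm

theorem IsSymmetricVec.exists_smul_eq (hne : ∀ k, ψs k ≠ 0)
    (hsym : IsSymmetricVec (tenProd ψs)) (k j : Fin N) : ∃ c : ℂ, ψs j = c • ψs k := by
  choose a ha using fun i => Function.ne_iff.1 (hne i)
  refine ⟨ψs j (a k) / ψs k (a k), funext fun x => ?_⟩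
  rw [Pi.smul_apply, smul_eq_mul, div_mul_eq_mul_div, eq_div_iff (ha k)]
  linear_combination hsym.mul_eq_mul ha j k x

theorem tenProd_smul (c : Fin N → ℂ) (ψ : Fin d → ℂ) :
    tenProd (fun k => c k • ψ) = (∏ k, c k) • tenPow ψ := by
  funext f
  simp [tenProd, tenPow, prod_mul_distrib]

theorem tenPow_smul (w : ℂ) (ψ : Fin d → ℂ) :
    tenPow (N := N) (w • ψ) = w ^ N • tenPow ψ := by
  funext f
  simp [tenPow, prod_mul_distrib]

end ProductState

theorem stmt0_general {d N : ℕ} (ψs : Fin N → Fin d → ℂ)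
    (hne : ∀ k, ψs k ≠ 0) (hsym : IsSymmetricVec (tenProd ψs)) :
    ∃ (ψ : Fin d → ℂ) (c : ℂ), ‖c‖ = 1 ∧ tenProd ψs = c • tenPow ψ := by
  rcases N.eq_zero_or_pos with rfl | hN
  · exact ⟨0, 1, norm_one, funext fun f => by simp [tenProd, tenPow]⟩
  set z : Fin N := ⟨0, hN⟩
  choose c hc using hsym.exists_smul_eq hne z
  obtain ⟨w, hw⟩ := IsAlgClosed.exists_pow_nat_eq (∏ k, c k) hN
  refine ⟨w • ψs z, 1, norm_one, ?_⟩
  calc tenProd ψs = tenProd (fun k => c k • ψs z) := congrArg tenProd (funext hc)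
    _ = (1 : ℂ) • tenPow (w • ψs z) := by rw [tenProd_smul, tenPow_smul, hw, one_smul]

/-- a pure product state of `N ≥ 1` nonzero factors lying in the
symmetric subspace has all factors equal up to phase: it equals `c • ψ^{⊗N}`
for some unit scalar `c`. -/
theorem stmt0 {d N : ℕ} (hN : 1 ≤ N) (ψs : Fin N → Fin d → ℂ)
    (hne : ∀ k, ψs k ≠ 0) (hsym : IsSymmetricVec (tenProd ψs)) :
    ∃ (ψ : Fin d → ℂ) (c : ℂ), ‖c‖ = 1 ∧ tenProd ψs = c • tenPow ψ :=
  stmt0_general ψs hne hsym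
end

section
/- Let U be a unitary on the symmetric subspace S[H₁^⊗N] such that for every unit vector |ψ⟩ ∈ H₁ there is a unit vector |φ(ψ)⟩ with U|ψ⟩^⊗N = |φ(ψ)⟩^⊗N. Then the map ψ ↦ φ(ψ) preserves inner products: ⟨φ(ψ')|φ(ψ)⟩ = ⟨ψ'|ψ⟩ for all ψ, ψ', assuming φ is continuous. -/
/-! Since `U` is unitary, `⟨φ ψ', φ x⟩ ^ N = ⟨ψ', x⟩ ^ N` for every unit vector `x`. After
extending `x ↦ ⟨φ ψ', φ x⟩` homogeneously off the unit sphere, its quotient by `⟨ψ', x⟩` is a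
continuous `N`-th root of unity on the complement of the complex hyperplane `ψ'^⊥`. That
complement has real codimension two, hence is connected, so the quotient is constantly equal to
its value `1` at `ψ'`. -/

open Finset Matrix

open Metric

theorem star_tenPow_dotProduct_tenPow {d N : ℕ} (ψ' ψ : Fin d → ℂ) :
    star (tenPow (N := N) ψ') ⬝ᵥ tenPow ψ = (star ψ' ⬝ᵥ ψ) ^ N := by
  simp only [dotProduct, Pi.star_apply, tenPow, Fintype.sum_pow, star_prod, ← prod_mul_distrib]

theorem Matrix.star_mulVec_dotProduct_mulVec_of_mem_unitaryGroup {n R : Type*} [Fintype n]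
    [DecidableEq n] [CommRing R] [StarRing R] {U : Matrix n n R} (hU : U ∈ unitaryGroup n R)
    (x y : n → R) : star (U *ᵥ x) ⬝ᵥ U *ᵥ y = star x ⬝ᵥ y := by
  rw [star_mulVec, dotProduct_mulVec, vecMul_vecMul, ← star_eq_conjTranspose, hU.1, vecMul_one]

theorem IsPreconnected.eqOn_of_pow_eq_pow {X K : Type*} [TopologicalSpace X] [Field K]
    [TopologicalSpace K] [IsTopologicalDivisionRing K] [T1Space K] {S : Set X}
    (hS : IsPreconnected S) {N : ℕ} (hN : N ≠ 0) {f g : X → K} (hf : ContinuousOn f S)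
    (hg : ContinuousOn g S) (hg₀ : ∀ x ∈ S, g x ≠ 0) (hpow : ∀ x ∈ S, f x ^ N = g x ^ N)
    {a : X} (ha : a ∈ S) (hfa : f a = g a) : Set.EqOn f g S := by
  have hroots : Set.MapsTo (fun x => f x / g x) S {z : K | z ^ N = 1} := fun x hx => by
    simp [div_pow, hpow x hx, hg₀ x hx]
  have hdiscrete : IsDiscrete {z : K | z ^ N = 1} := by
    classical
    refine Set.Finite.isDiscrete <|
      (Polynomial.nthRoots N (1 : K)).toFinset.finite_toSet.subset fun z hz => ?_
    simpa [Polynomial.mem_nthRoots (Nat.pos_of_ne_zero hN)] using hz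
  intro x hx
  have hconst : f x / g x = f a / g a :=
    hS.constant_of_mapsTo hdiscrete (hf.div hg hg₀) hroots hx ha
  rwa [hfa, div_self (hg₀ a ha), div_eq_one_iff_eq (hg₀ x hx)] at hconst

theorem LinearMap.isPreconnected_setOf_ne_zero {F : Type*} [NormedAddCommGroup F] [NormedSpace ℂ F]
    (f : F →ₗ[ℂ] ℂ) : IsPreconnected {x | f x ≠ 0} := by
  rcases eq_or_ne f 0 with rfl | hf
  · simpa using isPreconnected_empty
  have hsurj : Function.Surjective (f.restrictScalars ℝ) := f.surjective_or_eq_zero.resolve_right hf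
  have hcodim : 1 < Module.rank ℝ (F ⧸ LinearMap.ker (f.restrictScalars ℝ)) := by
    have hrank := ((f.restrictScalars ℝ).quotKerEquivOfSurjective hsurj).lift_rank_eq
    rw [Complex.rank_real_complex'] at hrank
    rw [← Cardinal.one_lt_lift_iff.{_, 0}, hrank]
    norm_num
  exact (isConnected_compl_of_one_lt_codim hcodim).isPreconnected

theorem ContinuousLinearMap.eqOn_sphere_of_pow_eq_pow {E : Type*} [NormedAddCommGroup E]
    [NormedSpace ℂ E] {N : ℕ} (hN : N ≠ 0) (ℓ : E →L[ℂ] ℂ) {g : E → ℂ}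
    (hg : ContinuousOn g (sphere 0 1)) (hpow : ∀ u ∈ sphere (0 : E) 1, g u ^ N = ℓ u ^ N)
    {u₀ : E} (hu₀ : u₀ ∈ sphere 0 1) (hℓu₀ : ℓ u₀ ≠ 0) (hgu₀ : g u₀ = ℓ u₀) :
    Set.EqOn g ℓ (sphere 0 1) := by
  intro u hu
  rcases eq_or_ne (ℓ u) 0 with hℓu | hℓu
  · rw [hℓu, ← pow_eq_zero_iff hN, hpow u hu, hℓu, zero_pow hN]
  let F : E → ℂ := fun x => ‖x‖ * g (‖x‖⁻¹ • x)
  have hF_sphere : ∀ v ∈ sphere (0 : E) 1, F v = g v := fun v hv => by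
    simp [F, mem_sphere_zero_iff_norm.mp hv]
  have hS : ∀ x ∈ {x | ℓ x ≠ 0}, x ≠ 0 := fun x hx h => hx (by simp [h])
  have hunit : ∀ x ∈ {x | ℓ x ≠ 0}, ‖x‖⁻¹ • x ∈ sphere (0 : E) 1 := fun x hx => by
    rw [mem_sphere_zero_iff_norm, norm_smul, norm_inv, norm_norm,
      inv_mul_cancel₀ (norm_ne_zero_iff.mpr (hS x hx))]
  have hnormalize : ContinuousOn (fun x : E => ‖x‖⁻¹ • x) {x | ℓ x ≠ 0} :=
    (continuous_norm.continuousOn.inv₀ fun x hx => norm_ne_zero_iff.mpr (hS x hx)).smul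
      continuousOn_id
  have hF : ContinuousOn F {x | ℓ x ≠ 0} :=
    (Complex.continuous_ofReal.comp continuous_norm).continuousOn.mul <|
      hg.comp hnormalize hunit
  have hFpow : ∀ x ∈ {x | ℓ x ≠ 0}, F x ^ N = ℓ x ^ N := fun x hx => by
    rw [mul_pow, hpow _ (hunit x hx), ← mul_pow,
      ContinuousLinearMap.map_smul_of_tower, Complex.real_smul, ← mul_assoc, Complex.ofReal_inv,
      mul_inv_cancel₀ (by exact_mod_cast norm_ne_zero_iff.mpr (hS x hx)), one_mul]
  rw [← hF_sphere u hu]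
  exact (ℓ : E →ₗ[ℂ] ℂ).isPreconnected_setOf_ne_zero.eqOn_of_pow_eq_pow hN hF
    ℓ.continuous.continuousOn (fun _ hx => hx) hFpow hℓu₀ (by rw [hF_sphere u₀ hu₀, hgu₀]) hℓu

theorem EuclideanSpace.mem_sphere_zero_one_iff {ι : Type*} [Fintype ι] (u : EuclideanSpace ℂ ι) :
    u ∈ sphere 0 1 ↔ ∑ i, Complex.normSq (u i) = 1 := by
  rw [mem_sphere_zero_iff_norm, ← pow_eq_one_iff_of_nonneg (norm_nonneg u) two_ne_zero,
    EuclideanSpace.norm_sq_eq]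
  simp [Complex.normSq_eq_norm_sq]

theorem star_dotProduct_self_of_sum_normSq_eq_one {ι : Type*} [Fintype ι] {x : ι → ℂ}
    (hx : ∑ i, Complex.normSq (x i) = 1) : star x ⬝ᵥ x = 1 := by
  have hx' : ‖WithLp.toLp 2 x‖ = 1 :=
    mem_sphere_zero_iff_norm.mp ((EuclideanSpace.mem_sphere_zero_one_iff _).mpr hx)
  rw [dotProduct_comm, ← EuclideanSpace.inner_toLp_toLp, inner_self_eq_norm_sq_to_K, hx']
  simp

/-- if a unitary `U` maps every tensor power `ψ^{⊗N}` of a unit vector to a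
tensor power `(φ ψ)^{⊗N}` of a unit vector, and `φ` is continuous, then `φ` preserves
inner products on unit vectors. -/
theorem stmt2 {d N : ℕ} (hN : 1 ≤ N)
    (U : Matrix (Fin N → Fin d) (Fin N → Fin d) ℂ)
    (hU : U ∈ Matrix.unitaryGroup (Fin N → Fin d) ℂ)
    (φ : (Fin d → ℂ) → (Fin d → ℂ)) (hφc : Continuous φ)
    (hact : ∀ ψ : Fin d → ℂ, (∑ x, Complex.normSq (ψ x)) = 1 →
      (∑ x, Complex.normSq (φ ψ x)) = 1 ∧ U.mulVec (tenPow ψ) = tenPow (φ ψ)) :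
    ∀ ψ ψ' : Fin d → ℂ, (∑ x, Complex.normSq (ψ x)) = 1 →
      (∑ x, Complex.normSq (ψ' x)) = 1 →
      star (φ ψ') ⬝ᵥ φ ψ = star ψ' ⬝ᵥ ψ := by
  intro ψ ψ' hψ hψ'
  have hpow : ∀ x : Fin d → ℂ, ∑ i, Complex.normSq (x i) = 1 →
      (star (φ ψ') ⬝ᵥ φ x) ^ N = (star ψ' ⬝ᵥ x) ^ N := fun x hx => by
    rw [← star_tenPow_dotProduct_tenPow, ← (hact ψ' hψ').2, ← (hact x hx).2,
      star_mulVec_dotProduct_mulVec_of_mem_unitaryGroup hU, star_tenPow_dotProduct_tenPow]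
  let ℓ : EuclideanSpace ℂ (Fin d) →L[ℂ] ℂ := innerSL ℂ (WithLp.toLp 2 ψ')
  have hℓ : ∀ u, ℓ u = star ψ' ⬝ᵥ u.ofLp := fun u => dotProduct_comm u.ofLp (star ψ')
  have hsphere : ∀ x : Fin d → ℂ, ∑ i, Complex.normSq (x i) = 1 → WithLp.toLp 2 x ∈ sphere 0 1 :=
    fun x hx => (EuclideanSpace.mem_sphere_zero_one_iff _).mpr hx
  have hψ'ψ' : star ψ' ⬝ᵥ ψ' = 1 := star_dotProduct_self_of_sum_normSq_eq_one hψ'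
  have hφψ'φψ' : star (φ ψ') ⬝ᵥ φ ψ' = 1 :=
    star_dotProduct_self_of_sum_normSq_eq_one (hact ψ' hψ').1
  have hagree := ℓ.eqOn_sphere_of_pow_eq_pow (Nat.one_le_iff_ne_zero.mp hN)
    (g := fun u => star (φ ψ') ⬝ᵥ φ u.ofLp) (by fun_prop)
    (fun u hu => by rw [hℓ]; exact hpow _ ((EuclideanSpace.mem_sphere_zero_one_iff u).mp hu))
    (hsphere ψ' hψ') (by simp [hℓ, hψ'ψ']) (by simp [hℓ, hψ'ψ', hφψ'φψ']) (hsphere ψ hψ)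
  simpa [hℓ] using hagree
end

section
/- Let N > 1 and let {Π_i}_{i=1}^k be nonzero mutually orthogonal projectors on H₁^⊗N, each of the form Π_i = P_N π_i^⊗N P_N for projectors π_i on H₁ with π_i π_j = δ_{ij} π_i, satisfying Σ_{i=1}^k Π_i = P_N. Then k = 1 and Π_1 = P_N. -/
open Finset

/-- The `N`-fold tensor power `π^{⊗N}` of a single-particle operator. -/
def matPow {d N : ℕ} (π : Matrix (Fin d) (Fin d) ℂ) :
    Matrix (Fin N → Fin d) (Fin N → Fin d) ℂ :=
  fun f g => ∏ k, π (f k) (g k)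

/-- The orthogonal projector `P_N` of `H₁^{⊗N}` onto the symmetric subspace. -/
noncomputable def symmetrizer (d N : ℕ) : Matrix (Fin N → Fin d) (Fin N → Fin d) ℂ :=
  fun f g => ((N.factorial : ℂ))⁻¹ * ∑ σ : Equiv.Perm (Fin N), if g = f ∘ σ then 1 else 0

/-!
Evaluate the completeness relation `∑ i, P_N π_i^{⊗N} P_N = P_N` on the product vector `v^{⊗N}`,
where `v = ∑ i, π_i u_i` has a nonzero component in the range of every `π_i`. Since `P_N` fixes
product vectors, both sides become powers: with `x_i = ⟪v, π_i v⟫ = ‖π_i u_i‖² > 0` and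
`⟪v, v⟫ = ∑ i, x_i` this reads `∑ i, x_i ^ N = (∑ i, x_i) ^ N`, which fails
for `N > 1` as soon as there are two summands.
-/

open Matrix
open scoped ComplexOrder

theorem Finset.sum_pow_lt_pow_sum {ι R : Type*} [CommSemiring R] [PartialOrder R]
    [IsStrictOrderedRing R] {s : Finset ι} {f : ι → R} {n : ℕ}
    (hf : ∀ i ∈ s, 0 < f i) (hs : 1 < #s) (hn : 1 < n) :
    ∑ i ∈ s, f i ^ n < (∑ i ∈ s, f i) ^ n := by
  obtain ⟨i, hi, j, hj, hij⟩ := Finset.one_lt_card.1 hs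
  set S := ∑ i ∈ s, f i
  have hle : ∀ l ∈ s, f l ≤ S := fun l hl =>
    single_le_sum (fun m hm => (hf m hm).le) hl
  have hlt : f i < S := by
    classical
    calc f i < f i + f j := lt_add_of_pos_right _ (hf j hj)
      _ = ∑ l ∈ {i, j}, f l := (sum_pair hij).symm
      _ ≤ S := sum_le_sum_of_subset_of_nonneg (by simp [insert_subset_iff, hi, hj])
        fun m hm _ => (hf m hm).le
  have hpow : ∀ l, f l ^ n = f l * f l ^ (n - 1) := fun l => by
    rw [← pow_succ', Nat.sub_add_cancel (by omega)]
  calc ∑ l ∈ s, f l ^ n < ∑ l ∈ s, f l * S ^ (n - 1) := by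
        refine sum_lt_sum (fun l hl => ?_) ⟨i, hi, ?_⟩
        · rw [hpow]
          exact mul_le_mul_of_nonneg_left (pow_le_pow_left₀ (hf l hl).le (hle l hl) _)
            (hf l hl).le
        · rw [hpow]
          exact mul_lt_mul_of_pos_left (pow_lt_pow_left₀ hlt (hf i hi).le (by omega)) (hf i hi)
    _ = S ^ n := by rw [← sum_mul, ← pow_succ', Nat.sub_add_cancel (by omega)]

section TensorPower

variable {α R : Type*} [CommSemiring R] {N : ℕ}

/-- The `N`-fold tensor power `v^{⊗N}` of a vector. -/
def vecPow (v : α → R) : (Fin N → α) → R := fun f => ∏ k, v (f k)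

theorem vecPow_dotProduct_vecPow [Fintype α] (u v : α → R) :
    vecPow (N := N) u ⬝ᵥ vecPow v = (u ⬝ᵥ v) ^ N := by
  simp only [dotProduct, vecPow, ← prod_mul_distrib]
  rw [← Fin.prod_const, prod_univ_sum, Fintype.piFinset_univ]

theorem star_vecPow [StarRing R] (v : α → R) : star (vecPow (N := N) v) = vecPow (star v) := by
  ext f
  simp [vecPow]

end TensorPower

theorem matPow_mulVec_vecPow {d N : ℕ} (π : Matrix (Fin d) (Fin d) ℂ) (v : Fin d → ℂ) :
    matPow (N := N) π *ᵥ vecPow v = vecPow (π *ᵥ v) := by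
  ext f
  simp only [mulVec, matPow, dotProduct, vecPow, ← prod_mul_distrib]
  rw [prod_univ_sum, Fintype.piFinset_univ]

theorem matPow_zero {d N : ℕ} (hN : N ≠ 0) :
    matPow (N := N) (0 : Matrix (Fin d) (Fin d) ℂ) = 0 := by
  ext f g
  simp [matPow, zero_pow hN]

theorem symmetrizer_mulVec_vecPow {d N : ℕ} (v : Fin d → ℂ) :
    symmetrizer d N *ᵥ vecPow v = vecPow v := by
  ext f
  have hperm : ∀ σ : Equiv.Perm (Fin N), ∏ k, v (f (σ k)) = ∏ k, v (f k) := fun σ =>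
    Equiv.prod_comp σ fun k => v (f k)
  simp only [mulVec, symmetrizer, dotProduct, vecPow, mul_assoc, ← mul_sum, sum_mul, ite_mul,
    one_mul, zero_mul]
  rw [sum_comm]
  simp only [sum_ite_eq', mem_univ, if_true, Function.comp, hperm, sum_const, card_univ,
    Fintype.card_perm, Fintype.card_fin, nsmul_eq_mul]
  rw [← mul_assoc, inv_mul_cancel₀ (by exact_mod_cast N.factorial_ne_zero), one_mul]

theorem sum_pow_star_dotProduct_mulVec_eq {d N k : ℕ} (π : Fin k → Matrix (Fin d) (Fin d) ℂ)
    (h : ∑ i, symmetrizer d N * matPow (π i) * symmetrizer d N = symmetrizer d N)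
    (v : Fin d → ℂ) :
    ∑ i, (star v ⬝ᵥ π i *ᵥ v) ^ N = (star v ⬝ᵥ v) ^ N := by
  have := congrArg (fun M => star (vecPow (N := N) v) ⬝ᵥ M *ᵥ vecPow v) h
  simpa only [sum_mulVec, dotProduct_sum, ← mulVec_mulVec, symmetrizer_mulVec_vecPow,
    matPow_mulVec_vecPow, star_vecPow, vecPow_dotProduct_vecPow] using this

theorem Matrix.IsHermitian.star_dotProduct_mulVec_self {n R : Type*} [Fintype n] [CommSemiring R]
    [StarRing R] {A : Matrix n n R} (hA : A.IsHermitian) (hA' : IsIdempotentElem A) (v : n → R) :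
    star v ⬝ᵥ A *ᵥ v = star (A *ᵥ v) ⬝ᵥ A *ᵥ v := by
  rw [star_mulVec, ← dotProduct_mulVec, hA.eq, mulVec_mulVec, hA'.eq]

theorem mulVec_sum_mulVec_of_orthogonal {ι n R : Type*} [Fintype ι] [DecidableEq ι] [Fintype n]
    [Semiring R] {π : ι → Matrix n n R} (horth : ∀ i j, π i * π j = if i = j then π i else 0)
    (u : ι → n → R) (j : ι) :
    π j *ᵥ ∑ i, π i *ᵥ u i = π j *ᵥ u j := by
  simp only [mulVec_sum, mulVec_mulVec, horth]
  rw [sum_eq_single j (fun i _ hij => by rw [if_neg hij.symm, zero_mulVec]) (by simp), if_pos rfl]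

/-- for `N > 1`, a complete family of nonzero mutually orthogonal
projectors of the form `Π_i = P_N π_i^{⊗N} P_N` summing to `P_N` must consist of a
single projector, equal to `P_N` itself. -/
theorem stmt4 {d N k : ℕ} (hN : 1 < N) (hk : 0 < k)
    (π : Fin k → Matrix (Fin d) (Fin d) ℂ)
    (hherm : ∀ i, (π i).IsHermitian)
    (horth : ∀ i j, π i * π j = if i = j then π i else 0)
    (Pi_ : Fin k → Matrix (Fin N → Fin d) (Fin N → Fin d) ℂ)
    (hdef : ∀ i, Pi_ i = symmetrizer d N * matPow (π i) * symmetrizer d N)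
    (hnz : ∀ i, Pi_ i ≠ 0)
    (hcomplete : ∑ i, Pi_ i = symmetrizer d N) :
    k = 1 ∧ Pi_ ⟨0, hk⟩ = symmetrizer d N := by
  have hidem : ∀ i, IsIdempotentElem (π i) := fun i => (horth i i).trans (if_pos rfl)
  have hcol : ∀ i, ∃ u, π i *ᵥ u ≠ 0 := fun i => by
    by_contra! h
    refine hnz i ?_
    rw [hdef i, ext_iff_mulVec.2 fun u => (h u).trans (zero_mulVec u).symm,
      matPow_zero (by omega), mul_zero, zero_mul]
  choose u hu using hcol
  obtain rfl : k = 1 := by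
    by_contra hk1
    set v := ∑ i, π i *ᵥ u i
    have hπv : ∀ j, π j *ᵥ v = π j *ᵥ u j := mulVec_sum_mulVec_of_orthogonal horth u
    have hpos : ∀ j ∈ univ, 0 < star v ⬝ᵥ π j *ᵥ v := fun j _ => by
      rw [(hherm j).star_dotProduct_mulVec_self (hidem j), dotProduct_star_self_pos_iff, hπv]
      exact hu j
    have hsplit : star v ⬝ᵥ v = ∑ j, star v ⬝ᵥ π j *ᵥ v := by
      rw [← dotProduct_sum]
      simp only [hπv, v]
    have hpow := sum_pow_star_dotProduct_mulVec_eq π (by simpa only [hdef] using hcomplete) v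
    rw [hsplit] at hpow
    exact (sum_pow_lt_pow_sum hpos (by rw [card_univ, Fintype.card_fin]; omega) hN).ne hpow
  exact ⟨rfl, by simpa using hcomplete⟩
end

section
/- Suppose a distance D on quantum states satisfies contractivity under channels, joint convexity, and direct-sum concavity D(⊕_i p_i ρ_i, ⊕_i q_i σ_i) ≥ Σ_i p_i D(ρ_i, σ_i). Then D is direct-sum linear: D(⊕_i p_i ρ_i, ⊕_i p_i σ_i) = Σ_i p_i D(ρ_i, σ_i). -/
open Finset ComplexOrder Matrix

/-- A density operator: positive semidefinite with unit trace. -/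
def IsDensity {n : Type} [Fintype n] (ρ : Matrix n n ℂ) : Prop :=
  ρ.PosSemidef ∧ ρ.trace = 1

/-- A quantum channel: completely positive trace-preserving map, presented by a
(finite) Kraus decomposition. -/
def IsCPTP {n m : Type} [Fintype n] [Fintype m] [DecidableEq n]
    (E : Matrix n n ℂ → Matrix m m ℂ) : Prop :=
  ∃ (r : ℕ) (K : Fin r → Matrix m n ℂ),
    (∀ ρ, E ρ = ∑ i, K i * ρ * (K i)ᴴ) ∧ (∑ i, (K i)ᴴ * K i = 1)

/-- The block-diagonal (classically flagged) state `⊕ᵢ pᵢ ρᵢ = Σᵢ pᵢ ρᵢ ⊗ |i⟩⟨i|`. -/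
def blockDiag {n : Type} [Fintype n] {m : ℕ}
    (p : Fin m → ℝ) (ρ : Fin m → Matrix n n ℂ) : Matrix (n × Fin m) (n × Fin m) ℂ :=
  fun a b => if a.2 = b.2 then (p a.2 : ℂ) * ρ a.2 a.1 b.1 else 0

/-! The flag `X ↦ X ⊗ |i⟩⟨i|` is a channel, with the single Kraus operator `|x⟩ ↦ |x⟩|i⟩`, and
`⊕ᵢ pᵢ ρᵢ = Σᵢ pᵢ (ρᵢ ⊗ |i⟩⟨i|)`. Joint convexity followed by contractivity under these channels
gives `D(⊕ᵢ pᵢ ρᵢ, ⊕ᵢ pᵢ σᵢ) ≤ Σᵢ pᵢ D(ρᵢ, σᵢ)`; direct-sum concavity with `q = p` is the reverse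
inequality. -/

open scoped Kronecker

section FlaggedEmbedding

variable {n ι : Type} [Fintype n] [DecidableEq n] [DecidableEq ι]

def flagIsometry (n : Type) [DecidableEq n] (i : ι) : Matrix (n × ι) n ℂ :=
  Matrix.of fun a b => if a = (b, i) then 1 else 0

theorem flagIsometry_mul_mul_conjTranspose (i : ι) (X : Matrix n n ℂ) :
    flagIsometry n i * X * (flagIsometry n i)ᴴ = X ⊗ₖ single i i 1 := by
  ext ⟨a, j⟩ ⟨b, k⟩
  by_cases hj : j = i <;> by_cases hk : k = i <;>
    simp [flagIsometry, Matrix.mul_apply, hj, hk, Prod.ext_iff, Ne.symm]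

theorem conjTranspose_flagIsometry_mul_self [Fintype ι] (i : ι) :
    (flagIsometry n i)ᴴ * flagIsometry n i = 1 := by
  ext a b
  simp [flagIsometry, Matrix.mul_apply, Matrix.one_apply, Prod.ext_iff, Fintype.sum_prod_type,
    ite_and, eq_comm]

theorem isCPTP_kronecker_single [Fintype ι] (i : ι) :
    IsCPTP fun X : Matrix n n ℂ => X ⊗ₖ single i i 1 :=
  ⟨1, fun _ => flagIsometry n i, fun X => by simp [flagIsometry_mul_mul_conjTranspose],
    by simp [conjTranspose_flagIsometry_mul_self]⟩

theorem IsDensity.kronecker_single [Fintype ι] {X : Matrix n n ℂ} (hX : IsDensity X) (i : ι) :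
    IsDensity (X ⊗ₖ single i i 1) := by
  refine ⟨?_, by rw [trace_kronecker, trace_single_eq_same, hX.2, mul_one]⟩
  rw [← flagIsometry_mul_mul_conjTranspose]
  exact hX.1.mul_mul_conjTranspose_same _

end FlaggedEmbedding

theorem blockDiag_eq_sum_kronecker_single {n : Type} [Fintype n] {m : ℕ}
    (p : Fin m → ℝ) (ρ : Fin m → Matrix n n ℂ) :
    blockDiag p ρ = ∑ i, (p i : ℂ) • (ρ i ⊗ₖ single i i 1) := by
  ext ⟨a, j⟩ ⟨b, k⟩
  by_cases h : j = k
  · subst h; simp [_root_.blockDiag, Matrix.sum_apply, single_apply]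
  · simp [_root_.blockDiag, Matrix.sum_apply, single_apply, ite_and, h]

/-- a distance on states which is contractive under channels, jointly
convex, and direct-sum concave is direct-sum linear. -/
theorem stmt5
    (D : ∀ (n : Type) [Fintype n] [DecidableEq n], Matrix n n ℂ → Matrix n n ℂ → ℝ)
    (hcontr : ∀ (n m : Type) [Fintype n] [DecidableEq n] [Fintype m] [DecidableEq m]
      (E : Matrix n n ℂ → Matrix m m ℂ), IsCPTP E →
      ∀ ρ σ : Matrix n n ℂ, IsDensity ρ → IsDensity σ → D m (E ρ) (E σ) ≤ D n ρ σ)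
    (hconv : ∀ (n : Type) [Fintype n] [DecidableEq n] (r : ℕ) (p : Fin r → ℝ),
      (∀ i, 0 ≤ p i) → (∑ i, p i = 1) →
      ∀ (ρ σ : Fin r → Matrix n n ℂ), (∀ i, IsDensity (ρ i)) → (∀ i, IsDensity (σ i)) →
      D n (∑ i, (p i : ℂ) • ρ i) (∑ i, (p i : ℂ) • σ i) ≤ ∑ i, p i * D n (ρ i) (σ i))
    (hconc : ∀ (n : Type) [Fintype n] [DecidableEq n] (r : ℕ) (p q : Fin r → ℝ),
      (∀ i, 0 ≤ p i) → (∑ i, p i = 1) → (∀ i, 0 ≤ q i) → (∑ i, q i = 1) →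
      ∀ (ρ σ : Fin r → Matrix n n ℂ), (∀ i, IsDensity (ρ i)) → (∀ i, IsDensity (σ i)) →
      ∑ i, p i * D n (ρ i) (σ i) ≤ D (n × Fin r) (blockDiag p ρ) (blockDiag q σ)) :
    ∀ (n : Type) [Fintype n] [DecidableEq n] (r : ℕ) (p : Fin r → ℝ),
      (∀ i, 0 ≤ p i) → (∑ i, p i = 1) →
      ∀ (ρ σ : Fin r → Matrix n n ℂ), (∀ i, IsDensity (ρ i)) → (∀ i, IsDensity (σ i)) →
      D (n × Fin r) (blockDiag p ρ) (blockDiag p σ) = ∑ i, p i * D n (ρ i) (σ i) := by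
  intro n _ _ r p hp hp1 ρ σ hρ hσ
  refine le_antisymm ?_ (hconc n r p p hp hp1 hp hp1 ρ σ hρ hσ)
  calc D (n × Fin r) (blockDiag p ρ) (blockDiag p σ)
      = D _ (∑ i, (p i : ℂ) • (ρ i ⊗ₖ single i i 1)) (∑ i, (p i : ℂ) • (σ i ⊗ₖ single i i 1)) := by
        rw [blockDiag_eq_sum_kronecker_single, blockDiag_eq_sum_kronecker_single]
    _ ≤ ∑ i, p i * D _ (ρ i ⊗ₖ single i i 1) (σ i ⊗ₖ single i i 1) :=
        hconv _ r p hp hp1 _ _ (fun i => (hρ i).kronecker_single i)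
          (fun i => (hσ i).kronecker_single i)
    _ ≤ ∑ i, p i * D n (ρ i) (σ i) :=
        Finset.sum_le_sum fun i _ => mul_le_mul_of_nonneg_left
          (hcontr n _ _ (isCPTP_kronecker_single i) _ _ (hρ i) (hσ i)) (hp i)
end

section
/- Under the same three hypotheses on D (contractivity, joint convexity, direct-sum concavity), D is ensemble-contractive: for any quantum instrument {E_i} with E_i(ρ) = p_i ρ_i and E_i(σ) = q_i σ_i, one has Σ_i p_i D(ρ_i, σ_i) ≤ D(ρ, σ). -/
open Finset ComplexOrder Matrix

/-- A completely positive map, presented by a (finite) Kraus decomposition. -/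
def IsCP {n m : Type} [Fintype n] [Fintype m]
    (E : Matrix n n ℂ → Matrix m m ℂ) : Prop :=
  ∃ (r : ℕ) (K : Fin r → Matrix m n ℂ), ∀ ρ, E ρ = ∑ i, K i * ρ * (K i)ᴴ

/-! Recording the outcome of the instrument in a classical register gives the channel
`ρ ↦ ⊕ᵢ Eᵢ(ρ)`, whose Kraus operators are those of the `Eᵢ` placed in the `i`-th block row.
It sends `ρ` and `σ` to `⊕ᵢ pᵢ ρᵢ` and `⊕ᵢ qᵢ σᵢ`, so contractivity followed by direct-sum
concavity gives the inequality. -/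

namespace Matrix

variable {R : Type*}

theorem eq_one_of_forall_trace_mul_eq {n : Type*} [Fintype n] [DecidableEq n] [CommSemiring R]
    {A : Matrix n n R} (h : ∀ X : Matrix n n R, (A * X).trace = X.trace) : A = 1 := by
  ext c d
  simpa [trace, mul_apply, single, one_apply, ite_and] using h (single d c 1)

variable {m n ι : Type*} [DecidableEq ι]

def flagRow [Zero R] (i : ι) (K : Matrix m n R) : Matrix (m × ι) n R :=
  of fun a b => if a.2 = i then K a.1 b else 0

theorem flagRow_mul_mul_conjTranspose [Fintype n] [Semiring R] [StarRing R]
    (i : ι) (K : Matrix m n R) (X : Matrix n n R) :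
    flagRow i K * X * (flagRow i K)ᴴ = blockDiagonal (Pi.single i (K * X * Kᴴ)) := by
  ext ⟨a, j⟩ ⟨b, k⟩
  by_cases hj : j = i <;> by_cases hk : k = i <;>
    simp [flagRow, blockDiagonal_apply, mul_apply, hj, hk, Finset.sum_mul, eq_comm (a := i)]

end Matrix

theorem isCPTP_of_kraus_of_trace_preserving {n m ι : Type} [Fintype n] [Fintype m]
    [DecidableEq n] [Fintype ι]
    {E : Matrix n n ℂ → Matrix m m ℂ} (K : ι → Matrix m n ℂ)
    (hK : ∀ ρ, E ρ = ∑ j, K j * ρ * (K j)ᴴ) (htr : ∀ ρ, (E ρ).trace = ρ.trace) : IsCPTP E := by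
  let e := (Fintype.equivFin ι).symm
  refine ⟨Fintype.card ι, K ∘ e, fun ρ => (hK ρ).trans (e.sum_comp _).symm, ?_⟩
  refine (e.sum_comp fun j => (K j)ᴴ * K j).trans (eq_one_of_forall_trace_mul_eq fun X => ?_)
  rw [← htr X, hK, sum_mul, trace_sum, trace_sum]
  exact Finset.sum_congr rfl fun j _ => by rw [trace_mul_cycle, trace_mul_cycle]

theorem isCPTP_blockDiagonal_of_instrument {n m ι : Type} [Fintype n] [Fintype m]
    [DecidableEq n] [Fintype ι] [DecidableEq ι] (E : ι → Matrix n n ℂ → Matrix m m ℂ)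
    (hCP : ∀ i, IsCP (E i)) (htr : ∀ ρ, (∑ i, E i ρ).trace = ρ.trace) :
    IsCPTP fun ρ => blockDiagonal fun i => E i ρ := by
  choose r K hK using hCP
  refine isCPTP_of_kraus_of_trace_preserving
    (fun s : Σ i, Fin (r i) => flagRow s.1 (K s.1 s.2)) (fun ρ => ?_)
    (fun ρ => by rw [trace_blockDiagonal, ← trace_sum, htr])
  simp_rw [flagRow_mul_mul_conjTranspose, Fintype.sum_sigma]
  ext ⟨a, i⟩ ⟨b, j⟩
  by_cases hij : i = j
  · subst hij
    rw [Matrix.sum_apply, Fintype.sum_eq_single i fun x hx => by simp [Matrix.sum_apply, hx]]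
    simp [Matrix.sum_apply, hK]
  · simp [Matrix.sum_apply, blockDiagonal_apply, hij]

theorem sum_eq_one_of_instrument {n m ι : Type} [Fintype n] [Fintype m] [Fintype ι]
    (E : ι → Matrix n n ℂ → Matrix m m ℂ) (htr : ∀ ρ, (∑ i, E i ρ).trace = ρ.trace)
    {ρ : Matrix n n ℂ} (hρ : ρ.trace = 1) (p : ι → ℝ) {ρs : ι → Matrix m m ℂ}
    (hρs : ∀ i, (ρs i).trace = 1) (hE : ∀ i, E i ρ = (p i : ℂ) • ρs i) : ∑ i, p i = 1 := by
  have := htr ρ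
  simp only [hE, trace_sum, trace_smul, hρs, hρ, smul_eq_mul, mul_one] at this
  exact_mod_cast this

theorem blockDiag_eq_blockDiagonal {n : Type} [Fintype n] {r : ℕ} (p : Fin r → ℝ)
    (ρ : Fin r → Matrix n n ℂ) : blockDiag p ρ = blockDiagonal fun i => (p i : ℂ) • ρ i := by
  ext a b
  simp [_root_.blockDiag, blockDiagonal_apply]

theorem stmt6_general
    (D : ∀ (n : Type) [Fintype n] [DecidableEq n], Matrix n n ℂ → Matrix n n ℂ → ℝ)
    (hcontr : ∀ (n m : Type) [Fintype n] [DecidableEq n] [Fintype m] [DecidableEq m]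
      (E : Matrix n n ℂ → Matrix m m ℂ), IsCPTP E →
      ∀ ρ σ : Matrix n n ℂ, IsDensity ρ → IsDensity σ → D m (E ρ) (E σ) ≤ D n ρ σ)
    (hconc : ∀ (n : Type) [Fintype n] [DecidableEq n] (r : ℕ) (p q : Fin r → ℝ),
      (∀ i, 0 ≤ p i) → (∑ i, p i = 1) → (∀ i, 0 ≤ q i) → (∑ i, q i = 1) →
      ∀ (ρ σ : Fin r → Matrix n n ℂ), (∀ i, IsDensity (ρ i)) → (∀ i, IsDensity (σ i)) →
      ∑ i, p i * D n (ρ i) (σ i) ≤ D (n × Fin r) (blockDiag p ρ) (blockDiag q σ)) :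
    ∀ (n m : Type) [Fintype n] [DecidableEq n] [Fintype m] [DecidableEq m]
      (r : ℕ) (E : Fin r → (Matrix n n ℂ → Matrix m m ℂ)),
      (∀ i, IsCP (E i)) → (∀ ρ : Matrix n n ℂ, (∑ i, E i ρ).trace = ρ.trace) →
      ∀ (ρ σ : Matrix n n ℂ), IsDensity ρ → IsDensity σ →
      ∀ (p q : Fin r → ℝ) (ρs σs : Fin r → Matrix m m ℂ),
        (∀ i, 0 ≤ p i) → (∀ i, 0 ≤ q i) →
        (∀ i, IsDensity (ρs i)) → (∀ i, IsDensity (σs i)) →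
        (∀ i, E i ρ = (p i : ℂ) • ρs i) → (∀ i, E i σ = (q i : ℂ) • σs i) →
        ∑ i, p i * D m (ρs i) (σs i) ≤ D n ρ σ := by
  intro n m _ _ _ _ r E hCP htr ρ σ hρ hσ p q ρs σs hp hq hρs hσs hEρ hEσ
  have hp_sum := sum_eq_one_of_instrument E htr hρ.2 p (fun i => (hρs i).2) hEρ
  have hq_sum := sum_eq_one_of_instrument E htr hσ.2 q (fun i => (hσs i).2) hEσ
  calc ∑ i, p i * D m (ρs i) (σs i)
      ≤ D (m × Fin r) (blockDiag p ρs) (blockDiag q σs) :=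
        hconc m r p q hp hp_sum hq hq_sum ρs σs hρs hσs
    _ = D (m × Fin r) (blockDiagonal fun i => E i ρ) (blockDiagonal fun i => E i σ) := by
        simp only [blockDiag_eq_blockDiagonal, hEρ, hEσ]
    _ ≤ D n ρ σ := hcontr n _ _ (isCPTP_blockDiagonal_of_instrument E hCP htr) ρ σ hρ hσ

/-- a distance on states which is contractive under channels, jointly
convex, and direct-sum concave is ensemble contractive: for any quantum instrument
`{Eᵢ}` with `Eᵢ(ρ) = pᵢ ρᵢ` and `Eᵢ(σ) = qᵢ σᵢ`, `Σᵢ pᵢ D(ρᵢ,σᵢ) ≤ D(ρ,σ)`. -/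
theorem stmt6
    (D : ∀ (n : Type) [Fintype n] [DecidableEq n], Matrix n n ℂ → Matrix n n ℂ → ℝ)
    (hcontr : ∀ (n m : Type) [Fintype n] [DecidableEq n] [Fintype m] [DecidableEq m]
      (E : Matrix n n ℂ → Matrix m m ℂ), IsCPTP E →
      ∀ ρ σ : Matrix n n ℂ, IsDensity ρ → IsDensity σ → D m (E ρ) (E σ) ≤ D n ρ σ)
    (hconv : ∀ (n : Type) [Fintype n] [DecidableEq n] (r : ℕ) (p : Fin r → ℝ),
      (∀ i, 0 ≤ p i) → (∑ i, p i = 1) →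
      ∀ (ρ σ : Fin r → Matrix n n ℂ), (∀ i, IsDensity (ρ i)) → (∀ i, IsDensity (σ i)) →
      D n (∑ i, (p i : ℂ) • ρ i) (∑ i, (p i : ℂ) • σ i) ≤ ∑ i, p i * D n (ρ i) (σ i))
    (hconc : ∀ (n : Type) [Fintype n] [DecidableEq n] (r : ℕ) (p q : Fin r → ℝ),
      (∀ i, 0 ≤ p i) → (∑ i, p i = 1) → (∀ i, 0 ≤ q i) → (∑ i, q i = 1) →
      ∀ (ρ σ : Fin r → Matrix n n ℂ), (∀ i, IsDensity (ρ i)) → (∀ i, IsDensity (σ i)) →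
      ∑ i, p i * D n (ρ i) (σ i) ≤ D (n × Fin r) (blockDiag p ρ) (blockDiag q σ)) :
    ∀ (n m : Type) [Fintype n] [DecidableEq n] [Fintype m] [DecidableEq m]
      (r : ℕ) (E : Fin r → (Matrix n n ℂ → Matrix m m ℂ)),
      (∀ i, IsCP (E i)) → (∀ ρ : Matrix n n ℂ, (∑ i, E i ρ).trace = ρ.trace) →
      ∀ (ρ σ : Matrix n n ℂ), IsDensity ρ → IsDensity σ →
      ∀ (p q : Fin r → ℝ) (ρs σs : Fin r → Matrix m m ℂ),
        (∀ i, 0 ≤ p i) → (∀ i, 0 ≤ q i) →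
        (∀ i, IsDensity (ρs i)) → (∀ i, IsDensity (σs i)) →
        (∀ i, E i ρ = (p i : ℂ) • ρs i) → (∀ i, E i σ = (q i : ℂ) • σs i) →
        ∑ i, p i * D m (ρs i) (σs i) ≤ D n ρ σ :=
  stmt6_general D hcontr hconc
end

section
/- Let D satisfy contractivity, joint convexity, and direct-sum concavity, let F = ⊕_N F_N be a direct sum of convex sets of states, and define M^D(ρ) = min_{σ∈F} D(ρ,σ) and M^D_N(ρ) = min_{σ∈F_N} D(ρ,σ). Then for any block-diagonal state ρ = ⊕_N p_N ρ^(N), M^D(⊕_N p_N ρ^(N)) = Σ_N p_N M^D_N(ρ^(N)). -/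
open Finset ComplexOrder Matrix

/-
Direct-sum concavity bounds `D(⊕ p_N ρ_N, ⊕ q_N σ_N)` from below by `Σ p_N D(ρ_N, σ_N)`, which
gives `≥`. For `≤`, take `⊕ p_N σ_N` with near-optimal `σ_N ∈ F_N`: `⊕ p_N ρ_N` is the convex
combination `Σ p_N V_N ρ_N V_N†` of the sector embeddings by isometries `V_N`, so joint convexity
followed by contractivity under the channels `ρ ↦ V_N ρ V_N†` gives
`D(⊕ p_N ρ_N, ⊕ p_N σ_N) ≤ Σ p_N D(ρ_N, σ_N)`. All infima are of sets bounded below, since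
contractivity under the trace-and-replace channel gives `D(1, 1) ≤ D(ρ, σ)` on the
one-dimensional space.
-/

theorem csInf_eq_sum_mul_csInf {ι : Type*} [Fintype ι] {S : Set ℝ} {T : ι → Set ℝ}
    {p : ι → ℝ} (hp : ∀ i, 0 ≤ p i) (hp1 : ∑ i, p i = 1) (hT : ∀ i, (T i).Nonempty)
    (hTb : ∀ i, BddBelow (T i))
    (hle : ∀ s ∈ S, ∃ x : ι → ℝ, (∀ i, x i ∈ T i) ∧ ∑ i, p i * x i ≤ s)
    (hge : ∀ x : ι → ℝ, (∀ i, x i ∈ T i) → ∃ s ∈ S, s ≤ ∑ i, p i * x i) :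
    sInf S = ∑ i, p i * sInf (T i) := by
  have hlow : ∀ s ∈ S, ∑ i, p i * sInf (T i) ≤ s := fun s hs ↦ by
    obtain ⟨x, hx, hxs⟩ := hle s hs
    exact (sum_le_sum fun i _ ↦
      mul_le_mul_of_nonneg_left (csInf_le (hTb i) (hx i)) (hp i)).trans hxs
  obtain ⟨s₀, hs₀, -⟩ := hge (fun i ↦ (hT i).some) fun i ↦ (hT i).some_mem
  refine le_antisymm (le_of_forall_pos_le_add fun ε hε ↦ ?_) (le_csInf ⟨s₀, hs₀⟩ hlow)
  choose x hx hxε using fun i ↦ Real.lt_sInf_add_pos (hT i) hε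
  obtain ⟨s, hs, hsx⟩ := hge x hx
  calc sInf S ≤ s := csInf_le ⟨_, hlow⟩ hs
    _ ≤ ∑ i, p i * x i := hsx
    _ ≤ ∑ i, p i * (sInf (T i) + ε) :=
      sum_le_sum fun i _ ↦ mul_le_mul_of_nonneg_left (hxε i).le (hp i)
    _ = ∑ i, p i * sInf (T i) + ε := by
      simp only [mul_add, sum_add_distrib, ← sum_mul, hp1, one_mul]

theorem isCPTP_of_kraus {ι n m : Type} [Fintype ι] [Fintype n] [Fintype m] [DecidableEq n]
    (K : ι → Matrix m n ℂ) (hK : ∑ i, (K i)ᴴ * K i = 1) :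
    IsCPTP fun ρ : Matrix n n ℂ ↦ ∑ i, K i * ρ * (K i)ᴴ := by
  let e := (Fintype.equivFin ι).symm
  refine ⟨Fintype.card ι, K ∘ e, fun ρ ↦ (e.sum_comp fun i ↦ K i * ρ * (K i)ᴴ).symm, ?_⟩
  exact (e.sum_comp fun i ↦ (K i)ᴴ * K i).trans hK

theorem isCPTP_trace_smul_one (n : Type) [Fintype n] [DecidableEq n] :
    IsCPTP fun ρ : Matrix n n ℂ ↦ (ρ.trace • 1 : Matrix Unit Unit ℂ) := by
  convert isCPTP_of_kraus (fun i : n ↦ single () i (1 : ℂ)) ?_ using 2 with ρ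
  · ext
    simp only [conjTranspose_single, star_one, single_mul_mul_single, mul_one, one_mul]
    simp [trace, Matrix.sum_apply]
  · simp [conjTranspose_single, sum_single_one]

def sectorIsometry (n : Type) {ι : Type} [DecidableEq n] [DecidableEq ι] (N : ι) :
    Matrix (n × ι) n ℂ :=
  Matrix.of fun a b ↦ if a = (b, N) then 1 else 0

section Sector
variable {n ι : Type} [Fintype n] [DecidableEq n] [DecidableEq ι]

theorem sectorIsometry_conjTranspose_mul [Fintype ι] (N : ι) :
    (sectorIsometry n N)ᴴ * sectorIsometry n N = (1 : Matrix n n ℂ) := by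
  ext b b'
  simp only [sectorIsometry, mul_apply, conjTranspose_apply, of_apply]
  simp [one_apply, eq_comm]

theorem sectorIsometry_mul_mul_conjTranspose (N : ι) (ρ : Matrix n n ℂ) :
    sectorIsometry n N * ρ * (sectorIsometry n N)ᴴ = blockDiagonal (Pi.single N ρ) := by
  ext ⟨a, i⟩ ⟨b, j⟩
  simp only [sectorIsometry, mul_apply, conjTranspose_apply, of_apply]
  by_cases hi : i = N <;> by_cases hj : j = N <;>
    simp [blockDiagonal_apply, hi, hj, eq_comm (a := N)]

theorem isCPTP_blockDiagonal_single [Fintype ι] (N : ι) :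
    IsCPTP fun ρ : Matrix n n ℂ ↦ blockDiagonal (Pi.single N ρ) := by
  simpa [sectorIsometry_mul_mul_conjTranspose] using
    isCPTP_of_kraus (fun _ : Unit ↦ sectorIsometry n N)
      (by simp [sectorIsometry_conjTranspose_mul])

theorem IsDensity.blockDiagonal_single [Fintype ι] {ρ : Matrix n n ℂ} (hρ : IsDensity ρ)
    (N : ι) : IsDensity (blockDiagonal (Pi.single N ρ)) := by
  refine ⟨?_, ?_⟩
  · rw [← sectorIsometry_mul_mul_conjTranspose]
    exact hρ.1.mul_mul_conjTranspose_same _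
  · simp [trace_blockDiagonal, Pi.single_apply, apply_ite trace, hρ.2]

end Sector

theorem blockDiag_eq_sum {n : Type} [Fintype n] [DecidableEq n] {r : ℕ} (p : Fin r → ℝ)
    (ρ : Fin r → Matrix n n ℂ) :
    _root_.blockDiag p ρ = ∑ N, (p N : ℂ) • blockDiagonal (Pi.single N (ρ N)) := by
  ext ⟨a, i⟩ ⟨b, j⟩
  simp [_root_.blockDiag, blockDiagonal_apply, Matrix.sum_apply, Pi.single_apply,
    apply_ite (fun M : Matrix n n ℂ ↦ M a b)]

section
variable (D : ∀ (n : Type) [Fintype n] [DecidableEq n], Matrix n n ℂ → Matrix n n ℂ → ℝ)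

def Contractive : Prop :=
  ∀ (n m : Type) [Fintype n] [DecidableEq n] [Fintype m] [DecidableEq m]
    (E : Matrix n n ℂ → Matrix m m ℂ), IsCPTP E →
    ∀ ρ σ : Matrix n n ℂ, IsDensity ρ → IsDensity σ → D m (E ρ) (E σ) ≤ D n ρ σ

def JointlyConvex : Prop :=
  ∀ (n : Type) [Fintype n] [DecidableEq n] (r : ℕ) (p : Fin r → ℝ),
    (∀ i, 0 ≤ p i) → (∑ i, p i = 1) →
    ∀ (ρ σ : Fin r → Matrix n n ℂ), (∀ i, IsDensity (ρ i)) → (∀ i, IsDensity (σ i)) →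
    D n (∑ i, (p i : ℂ) • ρ i) (∑ i, (p i : ℂ) • σ i) ≤ ∑ i, p i * D n (ρ i) (σ i)

variable {D}

theorem Contractive.unit_le (hD : Contractive D) {n : Type} [Fintype n] [DecidableEq n]
    {ρ σ : Matrix n n ℂ} (hρ : IsDensity ρ) (hσ : IsDensity σ) : D Unit 1 1 ≤ D n ρ σ := by
  simpa [hρ.2, hσ.2] using hD n Unit _ (isCPTP_trace_smul_one n) ρ σ hρ hσ

theorem JointlyConvex.blockDiag_le (hconv : JointlyConvex D) (hcontr : Contractive D)
    {n : Type} [Fintype n] [DecidableEq n] {r : ℕ} {p : Fin r → ℝ} (hp : ∀ N, 0 ≤ p N)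
    (hp1 : ∑ N, p N = 1)
    {ρ σ : Fin r → Matrix n n ℂ} (hρ : ∀ N, IsDensity (ρ N)) (hσ : ∀ N, IsDensity (σ N)) :
    D (n × Fin r) (_root_.blockDiag p ρ) (_root_.blockDiag p σ) ≤
      ∑ N, p N * D n (ρ N) (σ N) := by
  rw [blockDiag_eq_sum, blockDiag_eq_sum]
  refine (hconv _ r p hp hp1 _ _ (fun N ↦ (hρ N).blockDiagonal_single N)
    fun N ↦ (hσ N).blockDiagonal_single N).trans (sum_le_sum fun N _ ↦ ?_)
  exact mul_le_mul_of_nonneg_left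
    (hcontr _ _ _ (isCPTP_blockDiagonal_single N) _ _ (hρ N) (hσ N)) (hp N)

end

/-- for a contractive, jointly convex, direct-sum concave distance `D` and
a free set `F = ⊕_N F_N` built from compact convex sets `F_N` of states on each sector,
the induced measure of a block-diagonal state decomposes as the `p`-average of the
sector-wise measures:
`min_{σ∈F} D(⊕ p_N ρ^(N), σ) = Σ_N p_N min_{σ∈F_N} D(ρ^(N), σ)`. -/
theorem stmt7
    (D : ∀ (n : Type) [Fintype n] [DecidableEq n], Matrix n n ℂ → Matrix n n ℂ → ℝ)
    (hcontr : ∀ (n m : Type) [Fintype n] [DecidableEq n] [Fintype m] [DecidableEq m]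
      (E : Matrix n n ℂ → Matrix m m ℂ), IsCPTP E →
      ∀ ρ σ : Matrix n n ℂ, IsDensity ρ → IsDensity σ → D m (E ρ) (E σ) ≤ D n ρ σ)
    (hconv : ∀ (n : Type) [Fintype n] [DecidableEq n] (r : ℕ) (p : Fin r → ℝ),
      (∀ i, 0 ≤ p i) → (∑ i, p i = 1) →
      ∀ (ρ σ : Fin r → Matrix n n ℂ), (∀ i, IsDensity (ρ i)) → (∀ i, IsDensity (σ i)) →
      D n (∑ i, (p i : ℂ) • ρ i) (∑ i, (p i : ℂ) • σ i) ≤ ∑ i, p i * D n (ρ i) (σ i))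
    (hconc : ∀ (n : Type) [Fintype n] [DecidableEq n] (r : ℕ) (p q : Fin r → ℝ),
      (∀ i, 0 ≤ p i) → (∑ i, p i = 1) → (∀ i, 0 ≤ q i) → (∑ i, q i = 1) →
      ∀ (ρ σ : Fin r → Matrix n n ℂ), (∀ i, IsDensity (ρ i)) → (∀ i, IsDensity (σ i)) →
      ∑ i, p i * D n (ρ i) (σ i) ≤ D (n × Fin r) (blockDiag p ρ) (blockDiag q σ)) :
    ∀ (n : Type) [Fintype n] [DecidableEq n] (r : ℕ)
      (F : Fin r → Set (Matrix n n ℂ)),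
      (∀ N, (F N).Nonempty) → (∀ N, IsCompact (F N)) → (∀ N, Convex ℝ (F N)) →
      (∀ N σ, σ ∈ F N → IsDensity σ) →
      ∀ (p : Fin r → ℝ), (∀ N, 0 ≤ p N) → (∑ N, p N = 1) →
      ∀ (ρ : Fin r → Matrix n n ℂ), (∀ N, IsDensity (ρ N)) →
      sInf {x : ℝ | ∃ (q : Fin r → ℝ) (σ : Fin r → Matrix n n ℂ),
          (∀ N, 0 ≤ q N) ∧ (∑ N, q N = 1) ∧ (∀ N, σ N ∈ F N) ∧
          x = D (n × Fin r) (blockDiag p ρ) (blockDiag q σ)}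
        = ∑ N, p N * sInf {x : ℝ | ∃ σ ∈ F N, x = D n (ρ N) σ} := by
  intro n _ _ r F hF _ _ hFdens p hp hp1 ρ hρ
  refine csInf_eq_sum_mul_csInf hp hp1 (fun N ↦ ?_) (fun N ↦ ?_) ?_ ?_
  · obtain ⟨σ, hσ⟩ := hF N
    exact ⟨_, σ, hσ, rfl⟩
  · refine ⟨D Unit 1 1, ?_⟩
    rintro _ ⟨σ, hσ, rfl⟩
    exact Contractive.unit_le hcontr (hρ N) (hFdens N σ hσ)
  · rintro _ ⟨q, σ, hq, hq1, hσ, rfl⟩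
    exact ⟨fun N ↦ D n (ρ N) (σ N), fun N ↦ ⟨σ N, hσ N, rfl⟩,
      hconc n r p q hp hp1 hq hq1 ρ σ hρ fun N ↦ hFdens N _ (hσ N)⟩
  · intro x hx
    choose σ hσ hxσ using hx
    refine ⟨_, ⟨p, σ, hp, hp1, hσ, rfl⟩, ?_⟩
    simpa only [hxσ] using JointlyConvex.blockDiag_le hconv hcontr hp hp1 hρ
      fun N ↦ hFdens N _ (hσ N)
end

section
/- Let ρ be a density operator, H a Hermitian operator, and Π a projector with Πρ = ρ. Then the quantum Fisher information satisfies F(ρ, H) = F(ρ, ΠHΠ) + 4V(ρ, H) − 4V(ρ, ΠHΠ), where V(ρ, X) = Tr(ρX²) − Tr(ρX)² is the variance. -/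
open Finset ComplexOrder Matrix

/-- The variance `V(ρ, X) = Tr(ρX²) − Tr(ρX)²`. -/
noncomputable def qVar {n : Type} [Fintype n] (ρ X : Matrix n n ℂ) : ℝ :=
  (ρ * X * X).trace.re - ((ρ * X).trace.re) ^ 2

/-- The quantum Fisher information
`F(ρ,H) = 2 Σ_{i,j : λᵢ+λⱼ>0} (λᵢ−λⱼ)²/(λᵢ+λⱼ) |⟨i|H|j⟩|²`,
computed in an eigenbasis of `ρ` (junk value `0` on non-Hermitian input). -/
noncomputable def qfi {n : Type} [Fintype n] [DecidableEq n]
    (ρ H : Matrix n n ℂ) : ℝ :=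
  if hρ : ρ.IsHermitian then
    2 * ∑ i, ∑ j,
      if 0 < hρ.eigenvalues i + hρ.eigenvalues j then
        (hρ.eigenvalues i - hρ.eigenvalues j) ^ 2 / (hρ.eigenvalues i + hρ.eigenvalues j) *
          Complex.normSq
            ((((hρ.eigenvectorUnitary : Matrix n n ℂ))ᴴ * H *
              (hρ.eigenvectorUnitary : Matrix n n ℂ)) i j)
      else 0
  else 0

/-!
In an eigenbasis of `ρ` with eigenvalues `λᵢ ≥ 0`, the weight `(λᵢ - λⱼ)² / (λᵢ + λⱼ)` equals
`λᵢ + λⱼ - 4 λᵢ λⱼ / (λᵢ + λⱼ)`, so by the symmetry `|Hᵢⱼ| = |Hⱼᵢ|`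
`F(ρ, H) = 4 Tr(ρH²) - 8 Σᵢⱼ λᵢ λⱼ / (λᵢ + λⱼ) |Hᵢⱼ|²`.
Since `Πρ = ρ`, `Π` fixes every eigenvector with `λᵢ ≠ 0`, so `ΠHΠ` and `H` have the same entries
wherever `λᵢ λⱼ ≠ 0` and the last sum is the same for both; likewise `Tr(ρΠHΠ) = Tr(ρH)`.
-/

namespace Matrix

variable {n : Type}

lemma IsHermitian.normSq_apply_swap {A : Matrix n n ℂ} (hA : A.IsHermitian) (i j : n) :
    Complex.normSq (A j i) = Complex.normSq (A i j) := by
  rw [← hA.apply i j]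
  exact (Complex.normSq_conj _).symm

variable [Fintype n]

lemma IsHermitian.mul_self_apply_diag {A : Matrix n n ℂ} (hA : A.IsHermitian) (i : n) :
    (A * A) i i = ((∑ j, Complex.normSq (A i j) : ℝ) : ℂ) := by
  rw [mul_apply, Complex.ofReal_sum]
  refine Finset.sum_congr rfl fun j _ => ?_
  rw [← hA.apply j i]
  exact Complex.mul_conj _

lemma IsHermitian.sum_add_mul_normSq {A : Matrix n n ℂ} (hA : A.IsHermitian) (w : n → ℝ) :
    ∑ i, ∑ j, (w i + w j) * Complex.normSq (A i j) =
      2 * ∑ i, ∑ j, w i * Complex.normSq (A i j) := by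
  have hswap : ∑ i, ∑ j, w j * Complex.normSq (A i j) = ∑ i, ∑ j, w i * Complex.normSq (A i j) := by
    rw [Finset.sum_comm]
    simp only [hA.normSq_apply_swap]
  simp only [add_mul, Finset.sum_add_distrib, hswap]
  ring

lemma conjTranspose_mul_mul_apply_congr {α m : Type} [NonUnitalSemiring α] [StarRing α]
    [Fintype m] {X X' : Matrix n m α} {M : Matrix n n α} {Y Y' : Matrix n m α} {i j : m}
    (hX : ∀ k, X k i = X' k i) (hY : ∀ k, Y k j = Y' k j) :
    (Xᴴ * M * Y) i j = (X'ᴴ * M * Y') i j := by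
  simp only [mul_apply, conjTranspose_apply, hX, hY]

lemma trace_mul_conj_of_mul_eq {α : Type} [CommSemiring α] [StarRing α] {ρ P : Matrix n n α} (hρ : ρ.IsHermitian) (hP : P.IsHermitian)
    (hPρ : P * ρ = ρ) (X : Matrix n n α) :
    (ρ * (P * X * P)).trace = (ρ * X).trace := by
  have hρP : ρ * P = ρ := by
    simpa only [conjTranspose_mul, hP.eq, hρ.eq] using congrArg conjTranspose hPρ
  rw [← Matrix.mul_assoc, ← Matrix.mul_assoc, hρP, trace_mul_comm, ← Matrix.mul_assoc, hPρ]

variable [DecidableEq n]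

lemma IsHermitian.trace_diagonal_mul_mul_self {A : Matrix n n ℂ} (hA : A.IsHermitian)
    (d : n → ℝ) :
    (diagonal (RCLike.ofReal ∘ d) * (A * A)).trace =
      ((∑ i, ∑ j, d i * Complex.normSq (A i j) : ℝ) : ℂ) := by
  simp only [trace, diag_apply, diagonal_mul, hA.mul_self_apply_diag, Function.comp_apply,
    Finset.mul_sum, Complex.ofReal_sum, Complex.ofReal_mul]
  rfl

noncomputable def toEigenbasis {ρ : Matrix n n ℂ} (hρ : ρ.IsHermitian) (X : Matrix n n ℂ) :
    Matrix n n ℂ :=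
  (hρ.eigenvectorUnitary : Matrix n n ℂ)ᴴ * X * hρ.eigenvectorUnitary

variable {ρ : Matrix n n ℂ} (hρ : ρ.IsHermitian)

lemma toEigenbasis_mul (X Y : Matrix n n ℂ) :
    toEigenbasis hρ (X * Y) = toEigenbasis hρ X * toEigenbasis hρ Y := by
  set U : Matrix n n ℂ := (hρ.eigenvectorUnitary : Matrix n n ℂ)
  have hU : U * Uᴴ = 1 := Unitary.coe_mul_star_self hρ.eigenvectorUnitary
  calc Uᴴ * (X * Y) * U = Uᴴ * X * (U * Uᴴ) * Y * U := by
        rw [hU, Matrix.mul_one]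
        simp only [Matrix.mul_assoc]
    _ = Uᴴ * X * U * (Uᴴ * Y * U) := by simp only [Matrix.mul_assoc]

lemma toEigenbasis_self : toEigenbasis hρ ρ = diagonal (RCLike.ofReal ∘ hρ.eigenvalues) := by
  rw [← hρ.conjStarAlgAut_star_eigenvectorUnitary, Unitary.conjStarAlgAut_star_apply]
  rfl

lemma trace_toEigenbasis (X : Matrix n n ℂ) : (toEigenbasis hρ X).trace = X.trace := by
  have hU : (hρ.eigenvectorUnitary : Matrix n n ℂ) * (hρ.eigenvectorUnitary : Matrix n n ℂ)ᴴ = 1 :=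
    Unitary.coe_mul_star_self _
  rw [toEigenbasis, Matrix.mul_assoc, trace_mul_comm, Matrix.mul_assoc, hU, Matrix.mul_one]

lemma isHermitian_toEigenbasis {X : Matrix n n ℂ} (hX : X.IsHermitian) :
    (toEigenbasis hρ X).IsHermitian :=
  isHermitian_conjTranspose_mul_mul _ hX

lemma trace_mul_mul_self_eq_sum {X : Matrix n n ℂ} (hX : X.IsHermitian) :
    (ρ * X * X).trace =
      ((∑ i, ∑ j, hρ.eigenvalues i * Complex.normSq (toEigenbasis hρ X i j) : ℝ) : ℂ) := by
  rw [Matrix.mul_assoc, ← trace_toEigenbasis hρ, toEigenbasis_mul, toEigenbasis_mul,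
    toEigenbasis_self, (isHermitian_toEigenbasis hρ hX).trace_diagonal_mul_mul_self]

variable {P : Matrix n n ℂ}

lemma mulVec_eigenvectorBasis_of_mul_eq (hPρ : P * ρ = ρ) {j : n} (hj : hρ.eigenvalues j ≠ 0) :
    P *ᵥ ⇑(hρ.eigenvectorBasis j) = ⇑(hρ.eigenvectorBasis j) := by
  have hv := hρ.mulVec_eigenvectorBasis j
  apply smul_right_injective (n → ℂ) hj
  calc hρ.eigenvalues j • P *ᵥ ⇑(hρ.eigenvectorBasis j)
      = P *ᵥ ρ *ᵥ ⇑(hρ.eigenvectorBasis j) := by rw [hv, mulVec_smul]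
    _ = hρ.eigenvalues j • ⇑(hρ.eigenvectorBasis j) := by rw [mulVec_mulVec, hPρ, hv]

lemma mul_eigenvectorUnitary_apply_of_mul_eq (hPρ : P * ρ = ρ) {j : n}
    (hj : hρ.eigenvalues j ≠ 0) (k : n) :
    (P * (hρ.eigenvectorUnitary : Matrix n n ℂ)) k j = hρ.eigenvectorUnitary k j := by
  simpa only [mul_apply, mulVec, dotProduct, IsHermitian.eigenvectorUnitary_apply] using
    congrFun (mulVec_eigenvectorBasis_of_mul_eq hρ hPρ hj) k

lemma toEigenbasis_conj_apply_of_mul_eq (hP : P.IsHermitian) (hPρ : P * ρ = ρ) (X : Matrix n n ℂ)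
    {i j : n} (hi : hρ.eigenvalues i ≠ 0) (hj : hρ.eigenvalues j ≠ 0) :
    toEigenbasis hρ (P * X * P) i j = toEigenbasis hρ X i j := by
  have hconj : toEigenbasis hρ (P * X * P) =
      (P * (hρ.eigenvectorUnitary : Matrix n n ℂ))ᴴ * X * (P * hρ.eigenvectorUnitary) := by
    simp only [toEigenbasis, conjTranspose_mul, hP.eq, Matrix.mul_assoc]
  rw [hconj]
  exact conjTranspose_mul_mul_apply_congr (mul_eigenvectorUnitary_apply_of_mul_eq hρ hPρ hi)
    (mul_eigenvectorUnitary_apply_of_mul_eq hρ hPρ hj)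

lemma sum_mul_div_mul_normSq_toEigenbasis_conj (hP : P.IsHermitian) (hPρ : P * ρ = ρ)
    (X : Matrix n n ℂ) :
    ∑ i, ∑ j, hρ.eigenvalues i * hρ.eigenvalues j / (hρ.eigenvalues i + hρ.eigenvalues j) *
        Complex.normSq (toEigenbasis hρ (P * X * P) i j) =
      ∑ i, ∑ j, hρ.eigenvalues i * hρ.eigenvalues j / (hρ.eigenvalues i + hρ.eigenvalues j) *
        Complex.normSq (toEigenbasis hρ X i j) := by
  refine Finset.sum_congr rfl fun i _ => Finset.sum_congr rfl fun j _ => ?_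
  by_cases hi : hρ.eigenvalues i = 0
  · simp [hi]
  by_cases hj : hρ.eigenvalues j = 0
  · simp [hj]
  rw [toEigenbasis_conj_apply_of_mul_eq hρ hP hPρ X hi hj]

end Matrix

lemma ite_sq_sub_div_add_mul {a b : ℝ} (ha : 0 ≤ a) (hb : 0 ≤ b) (c : ℝ) :
    (if 0 < a + b then (a - b) ^ 2 / (a + b) * c else 0) =
      (a + b) * c - 4 * (a * b / (a + b) * c) := by
  -- at `a = b = 0` the right side vanishes only because `a * b / 0 = 0`
  split_ifs with h
  · field_simp
    ring
  · obtain ⟨rfl, rfl⟩ : a = 0 ∧ b = 0 := ⟨by linarith, by linarith⟩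
    simp

theorem qfi_eq_four_mul_trace_sub {n : Type} [Fintype n] [DecidableEq n] {ρ H : Matrix n n ℂ}
    (hρ : ρ.PosSemidef) (hH : H.IsHermitian) :
    qfi ρ H = 4 * (ρ * H * H).trace.re - 8 * ∑ i, ∑ j,
      hρ.isHermitian.eigenvalues i * hρ.isHermitian.eigenvalues j /
        (hρ.isHermitian.eigenvalues i + hρ.isHermitian.eigenvalues j) *
        Complex.normSq (toEigenbasis hρ.isHermitian H i j) := by
  set hρ' := hρ.isHermitian
  set ev := hρ'.eigenvalues
  set A := toEigenbasis hρ' H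
  calc qfi ρ H = 2 * ∑ i, ∑ j, ((ev i + ev j) * Complex.normSq (A i j) -
        4 * (ev i * ev j / (ev i + ev j) * Complex.normSq (A i j))) := by
        rw [qfi, dif_pos hρ']
        congr 1
        refine Finset.sum_congr rfl fun i _ => Finset.sum_congr rfl fun j _ => ?_
        exact ite_sq_sub_div_add_mul (hρ.eigenvalues_nonneg i) (hρ.eigenvalues_nonneg j) _
    _ = 2 * ∑ i, ∑ j, (ev i + ev j) * Complex.normSq (A i j) -
        8 * ∑ i, ∑ j, ev i * ev j / (ev i + ev j) * Complex.normSq (A i j) := by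
        simp only [Finset.sum_sub_distrib, ← Finset.mul_sum]
        ring
    _ = _ := by
        rw [(isHermitian_toEigenbasis hρ' hH).sum_add_mul_normSq, trace_mul_mul_self_eq_sum hρ' hH,
          Complex.ofReal_re]
        ring

theorem stmt9_general {n : Type} [Fintype n] [DecidableEq n]
    (ρ H P : Matrix n n ℂ) (hρ : IsDensity ρ) (hH : H.IsHermitian)
    (hPherm : P.IsHermitian) (hPρ : P * ρ = ρ) :
    qfi ρ H = qfi ρ (P * H * P) + 4 * qVar ρ H - 4 * qVar ρ (P * H * P) := by
  obtain ⟨hpsd, -⟩ := hρ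
  have hPHP : (P * H * P).IsHermitian := by
    simpa only [hPherm.eq] using isHermitian_conjTranspose_mul_mul P hH
  rw [qfi_eq_four_mul_trace_sub hpsd hH, qfi_eq_four_mul_trace_sub hpsd hPHP, qVar, qVar,
    sum_mul_div_mul_normSq_toEigenbasis_conj _ hPherm hPρ,
    trace_mul_conj_of_mul_eq hpsd.isHermitian hPherm hPρ]
  ring

/-- for a projector `Π` with `Πρ = ρ`, the quantum Fisher information
satisfies `F(ρ, H) = F(ρ, ΠHΠ) + 4V(ρ, H) − 4V(ρ, ΠHΠ)`. -/
theorem stmt9 {n : Type} [Fintype n] [DecidableEq n]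
    (ρ H P : Matrix n n ℂ) (hρ : IsDensity ρ) (hH : H.IsHermitian)
    (hPherm : P.IsHermitian) (hPP : P * P = P) (hPρ : P * ρ = ρ) :
    qfi ρ H = qfi ρ (P * H * P) + 4 * qVar ρ H - 4 * qVar ρ (P * H * P) :=
  stmt9_general ρ H P hρ hH hPherm hPρ
end

section
/- For real parameters g_z, g_y and collective spin operators satisfying [S_z^K, S_y^K] = −i S_x^K for K ∈ {A, B}, every separable state σ of the bipartite system satisfies Var_σ(g_z S_z^A + S_z^B) + Var_σ(g_y S_y^A + S_y^B) − ⟨|g_z g_y| S_x^A + S_x^B⟩_σ ≥ 0. -/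
/-! For one system, expanding `0 ≤ ⟨(A' ± iB')ᴴ (A' ± iB')⟩` with `A' = A - ⟨A⟩`, `B' = B - ⟨B⟩`
gives `|⟨C⟩| ≤ Var A + Var B` whenever `[A, B] = -iC`: Robertson's relation `|⟨C⟩| ≤ 2 ΔA ΔB`
already weakened by AM–GM. On a product state `ρ_A ⊗ ρ_B` the variance of a local sum splits,
`Var(X ⊗ 1 + 1 ⊗ Y) = Var X + Var Y`, so the bound for `(g_z S_z^A, g_y S_y^A)` and for
`(S_z^B, S_y^B)` gives the claim on product states. It passes to separable states because the mean
is linear and the variance concave in the state. -/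

open Finset ComplexOrder Matrix Kronecker

/-- Expectation value `⟨X⟩_ρ = Tr(ρX)` (real part). -/
noncomputable def expVal {n : Type} [Fintype n] (ρ X : Matrix n n ℂ) : ℝ :=
  (ρ * X).trace.re

noncomputable def varVal {n : Type} [Fintype n] (ρ X : Matrix n n ℂ) : ℝ :=
  expVal ρ (X * X) - (expVal ρ X) ^ 2

section ExpVal

variable {n : Type}

lemma Matrix.IsHermitian.sub_ofReal_smul_one [DecidableEq n] {A : Matrix n n ℂ}
    (hA : A.IsHermitian) (c : ℝ) : (A - (c : ℂ) • 1).IsHermitian :=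
  hA.sub (Matrix.isHermitian_one.smul (Complex.conj_ofReal c))

variable [Fintype n]

lemma expVal_add (ρ X Y : Matrix n n ℂ) : expVal ρ (X + Y) = expVal ρ X + expVal ρ Y := by
  simp [expVal, mul_add]

lemma expVal_sub (ρ X Y : Matrix n n ℂ) : expVal ρ (X - Y) = expVal ρ X - expVal ρ Y := by
  simp [expVal, mul_sub]

lemma expVal_ofReal_smul (ρ X : Matrix n n ℂ) (c : ℝ) :
    expVal ρ ((c : ℂ) • X) = c * expVal ρ X := by
  simp [expVal]

lemma expVal_one [DecidableEq n] {ρ : Matrix n n ℂ} (hρ : ρ.trace = 1) : expVal ρ 1 = 1 := by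
  simp [expVal, hρ]

lemma expVal_sum_smul {ι : Type*} (s : Finset ι) (p : ι → ℝ) (ρ : ι → Matrix n n ℂ)
    (X : Matrix n n ℂ) :
    expVal (∑ i ∈ s, (p i : ℂ) • ρ i) X = ∑ i ∈ s, p i * expVal (ρ i) X := by
  simp [expVal, Finset.sum_mul, Matrix.trace_sum, Complex.re_sum]

lemma expVal_conjTranspose_mul_self_nonneg {ρ : Matrix n n ℂ} (hρ : ρ.PosSemidef)
    (X : Matrix n n ℂ) : 0 ≤ expVal ρ (Xᴴ * X) := by
  have h : 0 ≤ (X * ρ * Xᴴ).trace := (hρ.mul_mul_conjTranspose_same X).trace_nonneg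
  rw [Matrix.trace_mul_cycle, Matrix.trace_mul_comm] at h
  exact (Complex.nonneg_iff.mp h).1

lemma im_trace_mul_eq_zero {ρ X : Matrix n n ℂ} (hρ : ρ.IsHermitian) (hX : X.IsHermitian) :
    (ρ * X).trace.im = 0 := by
  rw [← Complex.conj_eq_iff_im, ← Complex.star_def, ← Matrix.trace_conjTranspose,
    Matrix.conjTranspose_mul, hρ.eq, hX.eq, Matrix.trace_mul_comm]

/-- `(A ± iB)ᴴ (A ± iB) = A² + B² ± C`, and its expectation in a positive state is nonnegative. -/
lemma abs_expVal_le_of_commutator {ρ A B C : Matrix n n ℂ} (hρ : ρ.PosSemidef)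
    (hA : A.IsHermitian) (hB : B.IsHermitian) (hcomm : A * B - B * A = (-Complex.I) • C) :
    |expVal ρ C| ≤ expVal ρ (A * A) + expVal ρ (B * B) := by
  have hC : C = Complex.I • (A * B - B * A) := by
    rw [hcomm, smul_smul, mul_neg, Complex.I_mul_I, neg_neg, one_smul]
  have hplus : (A + Complex.I • B)ᴴ * (A + Complex.I • B) = A * A + B * B + C := by
    rw [hC, Matrix.conjTranspose_add, Matrix.conjTranspose_smul, hA.eq, hB.eq]
    simp only [add_mul, mul_add, smul_mul_assoc, mul_smul_comm,
      Complex.star_def, Complex.conj_I]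
    match_scalars <;> simp
  have hminus : (A - Complex.I • B)ᴴ * (A - Complex.I • B) = A * A + B * B - C := by
    rw [hC, Matrix.conjTranspose_sub, Matrix.conjTranspose_smul, hA.eq, hB.eq]
    simp only [sub_mul, mul_sub, smul_mul_assoc, mul_smul_comm,
      Complex.star_def, Complex.conj_I]
    match_scalars <;> simp
  have h₁ := expVal_conjTranspose_mul_self_nonneg hρ (A + Complex.I • B)
  have h₂ := expVal_conjTranspose_mul_self_nonneg hρ (A - Complex.I • B)
  rw [hplus, expVal_add, expVal_add] at h₁
  rw [hminus, expVal_sub, expVal_add] at h₂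
  exact abs_le.mpr ⟨by linarith, by linarith⟩

lemma varVal_eq_expVal_sub_smul_one_sq [DecidableEq n] {ρ : Matrix n n ℂ} (hρ : ρ.trace = 1)
    (A : Matrix n n ℂ) :
    varVal ρ A = expVal ρ ((A - (expVal ρ A : ℂ) • 1) * (A - (expVal ρ A : ℂ) • 1)) := by
  set a := expVal ρ A
  have hsq : (A - (a : ℂ) • 1) * (A - (a : ℂ) • 1)
      = A * A - ((2 * a : ℝ) : ℂ) • A + ((a ^ 2 : ℝ) : ℂ) • 1 := by
    simp only [sub_mul, mul_sub, smul_mul_assoc, mul_smul_comm, one_mul, mul_one]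
    push_cast
    module
  rw [hsq, expVal_add, expVal_sub, expVal_ofReal_smul, expVal_ofReal_smul, expVal_one hρ, varVal]
  ring

lemma abs_expVal_le_varVal_add_varVal [DecidableEq n] {ρ A B C : Matrix n n ℂ}
    (hρ : IsDensity ρ) (hA : A.IsHermitian) (hB : B.IsHermitian)
    (hcomm : A * B - B * A = (-Complex.I) • C) :
    |expVal ρ C| ≤ varVal ρ A + varVal ρ B := by
  rw [varVal_eq_expVal_sub_smul_one_sq hρ.2 A, varVal_eq_expVal_sub_smul_one_sq hρ.2 B]
  refine abs_expVal_le_of_commutator hρ.1 (hA.sub_ofReal_smul_one _) (hB.sub_ofReal_smul_one _) ?_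
  rw [← hcomm]
  simp only [sub_mul, mul_sub, smul_mul_assoc, mul_smul_comm, one_mul, mul_one]
  module

end ExpVal

section Mixture

variable {n ι : Type} [Fintype n] (s : Finset ι) {p : ι → ℝ}

lemma sum_mul_varVal_le_varVal_sum_smul (hp : ∀ i ∈ s, 0 ≤ p i) (hp1 : ∑ i ∈ s, p i = 1)
    (ρ : ι → Matrix n n ℂ) (X : Matrix n n ℂ) :
    ∑ i ∈ s, p i * varVal (ρ i) X ≤ varVal (∑ i ∈ s, (p i : ℂ) • ρ i) X := by
  have jensen := (even_two.convexOn_pow (𝕜 := ℝ)).map_sum_le hp hp1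
    (p := fun i => expVal (ρ i) X) fun _ _ => Set.mem_univ _
  simp only [smul_eq_mul] at jensen
  simp only [varVal, expVal_sum_smul, mul_sub, Finset.sum_sub_distrib]
  linarith

lemma expVal_sum_smul_le_varVal_add_varVal (hp : ∀ i ∈ s, 0 ≤ p i) (hp1 : ∑ i ∈ s, p i = 1)
    {ρ : ι → Matrix n n ℂ} {C Z Y : Matrix n n ℂ}
    (h : ∀ i ∈ s, expVal (ρ i) C ≤ varVal (ρ i) Z + varVal (ρ i) Y) :
    expVal (∑ i ∈ s, (p i : ℂ) • ρ i) C
      ≤ varVal (∑ i ∈ s, (p i : ℂ) • ρ i) Z + varVal (∑ i ∈ s, (p i : ℂ) • ρ i) Y :=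
  calc expVal (∑ i ∈ s, (p i : ℂ) • ρ i) C
      = ∑ i ∈ s, p i * expVal (ρ i) C := expVal_sum_smul s p ρ C
    _ ≤ ∑ i ∈ s, p i * (varVal (ρ i) Z + varVal (ρ i) Y) :=
      Finset.sum_le_sum fun i hi => mul_le_mul_of_nonneg_left (h i hi) (hp i hi)
    _ = ∑ i ∈ s, p i * varVal (ρ i) Z + ∑ i ∈ s, p i * varVal (ρ i) Y := by
      simp only [mul_add, Finset.sum_add_distrib]
    _ ≤ _ := add_le_add (sum_mul_varVal_le_varVal_sum_smul s hp hp1 ρ Z)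
      (sum_mul_varVal_le_varVal_sum_smul s hp hp1 ρ Y)

end Mixture

section Kronecker

variable {m n : Type} [Fintype m] [Fintype n]

lemma expVal_kronecker_one [DecidableEq n] (ρA : Matrix m m ℂ) {ρB : Matrix n n ℂ}
    (hρB : ρB.trace = 1) (X : Matrix m m ℂ) : expVal (ρA ⊗ₖ ρB) (X ⊗ₖ 1) = expVal ρA X := by
  rw [expVal, ← mul_kronecker_mul, mul_one, trace_kronecker, hρB, mul_one, expVal]

lemma expVal_one_kronecker [DecidableEq m] {ρA : Matrix m m ℂ} (hρA : ρA.trace = 1)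
    (ρB Y : Matrix n n ℂ) : expVal (ρA ⊗ₖ ρB) (1 ⊗ₖ Y) = expVal ρB Y := by
  rw [expVal, ← mul_kronecker_mul, mul_one, trace_kronecker, hρA, one_mul, expVal]

lemma expVal_kronecker {ρA X : Matrix m m ℂ} (hρA : ρA.IsHermitian) (hX : X.IsHermitian)
    (ρB Y : Matrix n n ℂ) : expVal (ρA ⊗ₖ ρB) (X ⊗ₖ Y) = expVal ρA X * expVal ρB Y := by
  rw [expVal, ← mul_kronecker_mul, trace_kronecker, Complex.mul_re, im_trace_mul_eq_zero hρA hX,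
    zero_mul, sub_zero, expVal, expVal]

lemma expVal_kronecker_add [DecidableEq m] [DecidableEq n] {ρA : Matrix m m ℂ}
    {ρB : Matrix n n ℂ} (hρA : ρA.trace = 1) (hρB : ρB.trace = 1) (X : Matrix m m ℂ)
    (Y : Matrix n n ℂ) :
    expVal (ρA ⊗ₖ ρB) (X ⊗ₖ 1 + 1 ⊗ₖ Y) = expVal ρA X + expVal ρB Y := by
  rw [expVal_add, expVal_kronecker_one ρA hρB, expVal_one_kronecker hρA]

lemma varVal_kronecker_add [DecidableEq m] [DecidableEq n] {ρA X : Matrix m m ℂ}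
    {ρB : Matrix n n ℂ} (hρA : ρA.IsHermitian) (hρA1 : ρA.trace = 1) (hρB1 : ρB.trace = 1)
    (hX : X.IsHermitian) (Y : Matrix n n ℂ) :
    varVal (ρA ⊗ₖ ρB) (X ⊗ₖ 1 + 1 ⊗ₖ Y) = varVal ρA X + varVal ρB Y := by
  have hsq : (X ⊗ₖ 1 + 1 ⊗ₖ Y) * (X ⊗ₖ 1 + 1 ⊗ₖ Y)
      = (X * X) ⊗ₖ 1 + 1 ⊗ₖ (Y * Y) + ((2 : ℝ) : ℂ) • X ⊗ₖ Y := by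
    simp only [add_mul, mul_add, ← mul_kronecker_mul, one_mul, mul_one]
    push_cast
    module
  rw [varVal, hsq, expVal_add, expVal_kronecker_add hρA1 hρB1, expVal_ofReal_smul,
    expVal_kronecker hρA hX, expVal_kronecker_add hρA1 hρB1, varVal, varVal]
  ring

end Kronecker

theorem stmt12_general {a b : Type} [Fintype a] [DecidableEq a] [Fintype b] [DecidableEq b]
    (SxA SyA SzA : Matrix a a ℂ) (SxB SyB SzB : Matrix b b ℂ)
    (hyA : SyA.IsHermitian) (hzA : SzA.IsHermitian)
    (hyB : SyB.IsHermitian) (hzB : SzB.IsHermitian)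
    (hcommA : SzA * SyA - SyA * SzA = (-Complex.I) • SxA)
    (hcommB : SzB * SyB - SyB * SzB = (-Complex.I) • SxB)
    (gz gy : ℝ)
    (σ : Matrix (a × b) (a × b) ℂ)
    (hsep : ∃ (r : ℕ) (p : Fin r → ℝ) (ρA : Fin r → Matrix a a ℂ)
        (ρB : Fin r → Matrix b b ℂ),
      (∀ i, 0 ≤ p i) ∧ (∑ i, p i = 1) ∧
      (∀ i, IsDensity (ρA i)) ∧ (∀ i, IsDensity (ρB i)) ∧
      σ = ∑ i, (p i : ℂ) • (ρA i ⊗ₖ ρB i)) :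
    0 ≤ varVal σ (((gz : ℂ) • SzA) ⊗ₖ (1 : Matrix b b ℂ) + (1 : Matrix a a ℂ) ⊗ₖ SzB)
        + varVal σ (((gy : ℂ) • SyA) ⊗ₖ (1 : Matrix b b ℂ) + (1 : Matrix a a ℂ) ⊗ₖ SyB)
        - expVal σ (((|gz * gy| : ℝ) : ℂ) • SxA ⊗ₖ (1 : Matrix b b ℂ)
            + (1 : Matrix a a ℂ) ⊗ₖ SxB) := by
  obtain ⟨r, p, ρA, ρB, hp, hp1, hρA, hρB, rfl⟩ := hsep
  have hcommA' : ((gz : ℂ) • SzA) * ((gy : ℂ) • SyA) - ((gy : ℂ) • SyA) * ((gz : ℂ) • SzA)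
      = (-Complex.I) • (((gz * gy : ℝ) : ℂ) • SxA) := by
    rw [smul_comm, ← hcommA]
    simp only [smul_mul_assoc, mul_smul_comm, smul_smul]
    push_cast
    module
  rw [sub_nonneg, ← smul_kronecker]
  refine expVal_sum_smul_le_varVal_add_varVal univ (fun i _ => hp i) hp1 fun i _ => ?_
  have hzA' := hzA.smul (Complex.conj_ofReal gz)
  have hyA' := hyA.smul (Complex.conj_ofReal gy)
  have hA := abs_expVal_le_varVal_add_varVal (hρA i) hzA' hyA' hcommA'
  have hB := abs_expVal_le_varVal_add_varVal (hρB i) hzB hyB hcommB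
  rw [expVal_ofReal_smul, abs_mul] at hA
  obtain ⟨hρAi, hρAi1⟩ := hρA i
  rw [expVal_kronecker_add hρAi1 (hρB i).2, expVal_ofReal_smul,
    varVal_kronecker_add hρAi.isHermitian hρAi1 (hρB i).2 hzA',
    varVal_kronecker_add hρAi.isHermitian hρAi1 (hρB i).2 hyA']
  linarith [mul_le_mul_of_nonneg_left (le_abs_self (expVal (ρA i) SxA)) (abs_nonneg (gz * gy)),
    le_abs_self (expVal (ρB i) SxB)]

/-- for collective spin operators with `[S_z^K, S_y^K] = −i S_x^K`,
every separable state `σ` of the bipartite system satisfies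
`Var(g_z S_z^A + S_z^B) + Var(g_y S_y^A + S_y^B) − ⟨|g_z g_y| S_x^A + S_x^B⟩ ≥ 0`. -/
theorem stmt12 {a b : Type} [Fintype a] [DecidableEq a] [Fintype b] [DecidableEq b]
    (SxA SyA SzA : Matrix a a ℂ) (SxB SyB SzB : Matrix b b ℂ)
    (hxA : SxA.IsHermitian) (hyA : SyA.IsHermitian) (hzA : SzA.IsHermitian)
    (hxB : SxB.IsHermitian) (hyB : SyB.IsHermitian) (hzB : SzB.IsHermitian)
    (hcommA : SzA * SyA - SyA * SzA = (-Complex.I) • SxA)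
    (hcommB : SzB * SyB - SyB * SzB = (-Complex.I) • SxB)
    (gz gy : ℝ)
    (σ : Matrix (a × b) (a × b) ℂ)
    (hsep : ∃ (r : ℕ) (p : Fin r → ℝ) (ρA : Fin r → Matrix a a ℂ)
        (ρB : Fin r → Matrix b b ℂ),
      (∀ i, 0 ≤ p i) ∧ (∑ i, p i = 1) ∧
      (∀ i, IsDensity (ρA i)) ∧ (∀ i, IsDensity (ρB i)) ∧
      σ = ∑ i, (p i : ℂ) • (ρA i ⊗ₖ ρB i)) :
    0 ≤ varVal σ (((gz : ℂ) • SzA) ⊗ₖ (1 : Matrix b b ℂ) + (1 : Matrix a a ℂ) ⊗ₖ SzB)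
        + varVal σ (((gy : ℂ) • SyA) ⊗ₖ (1 : Matrix b b ℂ) + (1 : Matrix a a ℂ) ⊗ₖ SyB)
        - expVal σ (((|gz * gy| : ℝ) : ℂ) • SxA ⊗ₖ (1 : Matrix b b ℂ)
            + (1 : Matrix a a ℂ) ⊗ₖ SxB) :=
  stmt12_general SxA SyA SzA SxB SyB SzB hyA hzA hyB hzB hcommA hcommB gz gy σ hsep
end

section
/- Let W be a Hermitian operator with eigenvalues contained in [W⁻, W⁺] where W⁻ < 0 < W⁺, and such that Tr[Wσ] ≥ 0 for every separable state σ. Then the trace-distance to the separable set satisfies min_{σ separable} (1/2)‖ρ − σ‖₁ ≥ −Tr[Wρ]/(W⁺ − W⁻) for every state ρ. -/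
/-!
Diagonalise `Δ = ρ - σ = ∑ εᵢ |uᵢ⟩⟨uᵢ|`. Then `∑ εᵢ = 0`, `‖Δ‖₁ = ∑ |εᵢ|` and
`Tr[WΔ] = ∑ εᵢ ⟨uᵢ|W|uᵢ⟩` with every `⟨uᵢ|W|uᵢ⟩ ∈ [W⁻, W⁺]`. Because `∑ εᵢ = 0` these weights may
be centred at `(W⁺ + W⁻)/2`, so `|Tr[WΔ]| ≤ (W⁺ - W⁻)/2 · ‖Δ‖₁`; this is the bound
`Tr[PΔ] ≤ ½‖Δ‖₁` for `0 ≤ P ≤ 1` applied to `P = (W - W⁻)/(W⁺ - W⁻)`. Together with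
`Tr[Wσ] ≥ 0` it gives `-Tr[Wρ] ≤ -Tr[WΔ] ≤ (W⁺ - W⁻)/2 · ‖ρ - σ‖₁`.
-/

open Finset ComplexOrder Matrix Kronecker

/-- Separable states of a bipartite system. -/
def IsSep {a b : Type} [Fintype a] [Fintype b]
    (σ : Matrix (a × b) (a × b) ℂ) : Prop :=
  ∃ (r : ℕ) (p : Fin r → ℝ) (ρA : Fin r → Matrix a a ℂ) (ρB : Fin r → Matrix b b ℂ),
    (∀ i, 0 ≤ p i) ∧ (∑ i, p i = 1) ∧
    (∀ i, IsDensity (ρA i)) ∧ (∀ i, IsDensity (ρB i)) ∧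
    σ = ∑ i, (p i : ℂ) • (ρA i ⊗ₖ ρB i)

/-- The trace norm of a Hermitian matrix: the sum of the absolute values of its
eigenvalues (junk value `0` on non-Hermitian input). -/
noncomputable def trNorm {n : Type} [Fintype n] [DecidableEq n]
    (A : Matrix n n ℂ) : ℝ :=
  if h : A.IsHermitian then ∑ i, |h.eigenvalues i| else 0

open scoped MatrixOrder

namespace Matrix

variable {𝕜 n : Type*} [RCLike 𝕜]

lemma re_diag_le_of_le {X Y : Matrix n n 𝕜} (h : X ≤ Y) (i : n) :
    RCLike.re (X i i) ≤ RCLike.re (Y i i) := by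
  simpa using (RCLike.le_iff_re_im.mp ((le_iff.mp h).diag_nonneg (i := i))).1

variable [Fintype n] [DecidableEq n]

lemma IsHermitian.algebraMap_le {A : Matrix n n 𝕜} (hA : A.IsHermitian) {m : ℝ}
    (h : ∀ i, m ≤ hA.eigenvalues i) : algebraMap ℝ _ m ≤ A := by
  rw [algebraMap_le_iff_le_spectrum hA.isSelfAdjoint, hA.spectrum_real_eq_range_eigenvalues]
  rintro _ ⟨i, rfl⟩
  exact h i

lemma IsHermitian.le_algebraMap {A : Matrix n n 𝕜} (hA : A.IsHermitian) {M : ℝ}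
    (h : ∀ i, hA.eigenvalues i ≤ M) : A ≤ algebraMap ℝ _ M := by
  rw [le_algebraMap_iff_spectrum_le hA.isSelfAdjoint, hA.spectrum_real_eq_range_eigenvalues]
  rintro _ ⟨i, rfl⟩
  exact h i

lemma re_diag_star_mul_mul_mem_Icc {U P : Matrix n n 𝕜} (hU : U ∈ unitary (Matrix n n 𝕜))
    {m M : ℝ} (hm : algebraMap ℝ _ m ≤ P) (hM : P ≤ algebraMap ℝ _ M) (i : n) :
    RCLike.re ((star U * P * U) i i) ∈ Set.Icc m M := by
  have hconj (r : ℝ) : star U * algebraMap ℝ _ r * U = algebraMap ℝ _ r := by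
    rw [← Algebra.commutes, mul_assoc, Unitary.star_mul_self_of_mem hU, mul_one]
  have hdiag (r : ℝ) : RCLike.re (algebraMap ℝ (Matrix n n 𝕜) r i i) = r := by
    simp [algebraMap_matrix_apply]
  constructor
  · simpa [hconj, hdiag] using re_diag_le_of_le (star_left_conjugate_le_conjugate hm U) i
  · simpa [hconj, hdiag] using re_diag_le_of_le (star_left_conjugate_le_conjugate hM U) i

lemma IsHermitian.trace_mul_eq_sum {A : Matrix n n 𝕜} (hA : A.IsHermitian) (B : Matrix n n 𝕜) :
    (B * A).trace = ∑ i, (star (hA.eigenvectorUnitary : Matrix n n 𝕜) * B *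
      hA.eigenvectorUnitary) i i * hA.eigenvalues i := by
  conv_lhs => rw [hA.spectral_theorem, Unitary.conjStarAlgAut_apply]
  rw [← mul_assoc, trace_mul_cycle, ← mul_assoc]
  simp only [trace, diag_apply, mul_diagonal, Function.comp_apply]

end Matrix

lemma abs_sum_mul_le_of_sum_eq_zero {ι : Type*} {s : Finset ι} {p ε : ι → ℝ} {m M : ℝ}
    (hε : ∑ i ∈ s, ε i = 0) (hp : ∀ i ∈ s, p i ∈ Set.Icc m M) :
    |∑ i ∈ s, p i * ε i| ≤ (M - m) / 2 * ∑ i ∈ s, |ε i| := by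
  have hcenter : ∑ i ∈ s, p i * ε i = ∑ i ∈ s, (p i - (m + M) / 2) * ε i := by
    simp only [sub_mul, Finset.sum_sub_distrib, ← Finset.mul_sum, hε, mul_zero, sub_zero]
  rw [hcenter, Finset.mul_sum]
  refine (Finset.abs_sum_le_sum_abs _ _).trans (Finset.sum_le_sum fun i hi => ?_)
  obtain ⟨hm, hM⟩ := hp i hi
  rw [abs_mul]
  exact mul_le_mul_of_nonneg_right (abs_le.2 ⟨by linarith, by linarith⟩) (abs_nonneg _)

lemma abs_re_trace_mul_le_trNorm {n : Type} [Fintype n] [DecidableEq n] {P Δ : Matrix n n ℂ}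
    {m M : ℝ} (hm : algebraMap ℝ _ m ≤ P) (hM : P ≤ algebraMap ℝ _ M) (hΔ : Δ.IsHermitian)
    (htr : Δ.trace = 0) : |(P * Δ).trace.re| ≤ (M - m) / 2 * trNorm Δ := by
  have hsum : ∑ i, hΔ.eigenvalues i = 0 := by
    rw [← RCLike.ofReal_eq_zero (K := ℂ), RCLike.ofReal_sum, ← hΔ.trace_eq_sum_eigenvalues, htr]
  rw [trNorm, dif_pos hΔ, hΔ.trace_mul_eq_sum, Complex.re_sum]
  simp only [← RCLike.re_to_complex, RCLike.re_mul_ofReal]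
  exact abs_sum_mul_le_of_sum_eq_zero hsum fun i _ =>
    re_diag_star_mul_mul_mem_Icc hΔ.eigenvectorUnitary.2 hm hM i

lemma IsSep.isDensity {a b : Type} [Fintype a] [Fintype b] {σ : Matrix (a × b) (a × b) ℂ}
    (hσ : IsSep σ) : IsDensity σ := by
  obtain ⟨r, p, ρA, ρB, hp, hp1, hA, hB, rfl⟩ := hσ
  have htrA (i : Fin r) : (ρA i).trace = 1 := (hA i).2
  have htrB (i : Fin r) : (ρB i).trace = 1 := (hB i).2
  refine ⟨posSemidef_sum _ fun i _ => ((hA i).1.kronecker (hB i).1).smul ?_, ?_⟩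
  · exact_mod_cast hp i
  · simp [trace_sum, trace_kronecker, htrA, htrB, ← Complex.ofReal_sum, hp1]

/-- for a Hermitian entanglement witness `W` with spectrum in `[W⁻, W⁺]`,
`W⁻ < 0 < W⁺`, and `Tr[Wσ] ≥ 0` on all separable states, the trace distance from any
state `ρ` to the separable set is at least `−Tr[Wρ]/(W⁺ − W⁻)`. -/
theorem stmt13 {a b : Type} [Fintype a] [DecidableEq a] [Fintype b] [DecidableEq b]
    (W : Matrix (a × b) (a × b) ℂ) (hW : W.IsHermitian)
    (Wm Wp : ℝ) (hWm : Wm < 0) (hWp : 0 < Wp)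
    (hspec : ∀ i, hW.eigenvalues i ∈ Set.Icc Wm Wp)
    (hwitness : ∀ σ : Matrix (a × b) (a × b) ℂ, IsSep σ → 0 ≤ (W * σ).trace.re)
    (ρ : Matrix (a × b) (a × b) ℂ) (hρ : IsDensity ρ) :
    ∀ σ : Matrix (a × b) (a × b) ℂ, IsSep σ →
      -((W * ρ).trace.re) / (Wp - Wm) ≤ (1 / 2) * trNorm (ρ - σ) := by
  intro σ hσ
  obtain ⟨hσpsd, hσtr⟩ := hσ.isDensity
  have hΔ : (ρ - σ).IsHermitian := hρ.1.isHermitian.sub hσpsd.isHermitian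
  have htr : (ρ - σ).trace = 0 := by rw [trace_sub, hρ.2, hσtr, sub_self]
  have hbound := abs_re_trace_mul_le_trNorm (hW.algebraMap_le fun i => (hspec i).1)
    (hW.le_algebraMap fun i => (hspec i).2) hΔ htr
  have hsplit : (W * (ρ - σ)).trace.re = (W * ρ).trace.re - (W * σ).trace.re := by
    rw [mul_sub, trace_sub, Complex.sub_re]
  rw [div_le_iff₀ (by linarith)]
  linarith [neg_abs_le (W * (ρ - σ)).trace.re, hwitness σ hσ]
end

section
/- The multimode Fock state |n⟩ = |n₀,…,n_{m−1}⟩ of N = Σ_i n_i bosons has first-quantized expansion |n⟩• = C(N; n)^{−1/2} Σ_{n_A: Σ_i n_{Ai} = N_A, n_{Ai} ≤ n_i} C(N_A; n_A)^{1/2} C(N−N_A; n−n_A)^{1/2} |n_A⟩•_{N_A} ⊗ |n−n_A⟩•_{N−N_A} when the N particles are partitioned into groups of N_A and N−N_A, where C(N; n) denotes the multinomial coefficient N!/(n₀!⋯n_{m−1}!). -/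
open Finset

/-- The occupation numbers of a multi-index `f : Fin N → Fin m`:
`occ f i` is the number of tensor factors in single-particle state `i`. -/
def occ {N m : ℕ} (f : Fin N → Fin m) : Fin m → ℕ :=
  fun i => (Finset.univ.filter (fun k => f k = i)).card

/-- The first-quantized (symmetrized, normalized) Fock state `|n⟩•` of occupation
vector `n`, as a function on multi-indices:
`|n⟩•(f) = C(N;n)^{−1/2}` if `occ f = n` and `0` otherwise, where `C(N;n)` is the
multinomial coefficient. -/
noncomputable def fockFQ (N m : ℕ) (n : Fin m → ℕ) : (Fin N → Fin m) → ℂ :=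
  fun f => if occ f = n then
    ((Real.sqrt (((Nat.multinomial Finset.univ n : ℕ) : ℝ))⁻¹ : ℝ) : ℂ)
  else 0

/-!
Multiplying `|n_A⟩• ⊗ |n - n_A⟩•` by the square roots of the two multinomial coefficients turns
it into the indicator of `occ f_A = n_A ∧ occ f_B = n - n_A`, where `f_A`, `f_B` are the two
halves of `f`. Since `occ f = occ f_A + occ f_B`, at most one `n_A` contributes, namely
`n_A = occ f_A`, and it does exactly when `occ f = n`; so the sum is the indicator of `occ f = n`.
-/

lemma sum_occ {N m : ℕ} (f : Fin N → Fin m) : ∑ i, occ f i = N := by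
  simp only [occ, Finset.card_filter]
  rw [Finset.sum_comm]
  simp

lemma occ_apply_eq_occ_castAdd_add_occ_natAdd {m NA NB : ℕ} (f : Fin (NA + NB) → Fin m)
    (i : Fin m) :
    occ f i = occ (fun k => f (Fin.castAdd NB k)) i + occ (fun k => f (Fin.natAdd NA k)) i := by
  simp only [occ, Finset.card_filter]
  rw [Fin.sum_univ_add]

lemma sqrt_multinomial_mul_fockFQ {N m : ℕ} (n : Fin m → ℕ) (f : Fin N → Fin m) :
    ((Real.sqrt (Nat.multinomial Finset.univ n : ℝ) : ℝ) : ℂ) * fockFQ N m n f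
      = if occ f = n then 1 else 0 := by
  have hpos : (0 : ℝ) < Nat.multinomial Finset.univ n := by
    exact_mod_cast Nat.multinomial_pos _ _
  unfold fockFQ
  split_ifs
  · rw [← Complex.ofReal_mul, Real.sqrt_inv, mul_inv_cancel₀ (Real.sqrt_pos.mpr hpos).ne',
      Complex.ofReal_one]
  · rw [mul_zero]

lemma occ_castAdd_natAdd_eq_iff {m NA NB : ℕ} (f : Fin (NA + NB) → Fin m) {n d : Fin m → ℕ}
    (hd : d ≤ n) :
    (occ (fun k => f (Fin.castAdd NB k)) = d ∧
        occ (fun k => f (Fin.natAdd NA k)) = fun i => n i - d i) ↔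
      (occ f = n ∧ occ (fun k => f (Fin.castAdd NB k)) = d) := by
  simp only [funext_iff, occ_apply_eq_occ_castAdd_add_occ_natAdd f]
  constructor
  · rintro ⟨hA, hB⟩
    exact ⟨fun i => by rw [hA, hB, Nat.add_sub_cancel' (hd i)], hA⟩
  · rintro ⟨hf, hA⟩
    exact ⟨hA, fun i => by rw [← hf i, hA]; omega⟩

lemma occ_castAdd_apply_le {m NA NB : ℕ} (f : Fin (NA + NB) → Fin m) (i : Fin m) :
    occ (fun k => f (Fin.castAdd NB k)) i ≤ occ f i :=
  Nat.le.intro (occ_apply_eq_occ_castAdd_add_occ_natAdd f i).symm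

lemma split_summand_eq_ite {m NA NB : ℕ} {n : Fin m → ℕ} (f : Fin (NA + NB) → Fin m)
    (d : ∀ i : Fin m, Fin (n i + 1)) :
    (if ∑ i, (d i : ℕ) = NA then
      (Real.sqrt (Nat.multinomial Finset.univ fun i => (d i : ℕ)) : ℂ) *
      (Real.sqrt (Nat.multinomial Finset.univ fun i => n i - d i) : ℂ) *
      fockFQ NA m (fun i => d i) (fun k => f (Fin.castAdd NB k)) *
      fockFQ NB m (fun i => n i - d i) (fun k => f (Fin.natAdd NA k))
    else 0) =
      if occ f = n ∧ occ (fun k => f (Fin.castAdd NB k)) = fun i => (d i : ℕ) then 1 else 0 := by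
  rw [mul_right_comm _ _ (fockFQ NA m _ _), mul_assoc, sqrt_multinomial_mul_fockFQ,
    sqrt_multinomial_mul_fockFQ, ite_zero_mul_ite_zero, one_mul]
  simp only [occ_castAdd_natAdd_eq_iff f fun i => Nat.le_of_lt_succ (d i).isLt]
  split_ifs with hNA hocc hocc <;> try rfl
  exact absurd (hocc.2 ▸ sum_occ _) hNA

theorem stmt19_general (m NA NB : ℕ) (n : Fin m → ℕ) :
    ∀ f : Fin (NA + NB) → Fin m,
      fockFQ (NA + NB) m n f
        = ((Real.sqrt (((Nat.multinomial Finset.univ n : ℕ) : ℝ))⁻¹ : ℝ) : ℂ) *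
          ∑ d : (∀ i : Fin m, Fin (n i + 1)),
            if (∑ i, ((d i : ℕ))) = NA then
              ((Real.sqrt ((Nat.multinomial Finset.univ (fun i => (d i : ℕ)) : ℕ) : ℝ) : ℝ) : ℂ) *
              ((Real.sqrt ((Nat.multinomial Finset.univ (fun i => n i - (d i : ℕ)) : ℕ) : ℝ) : ℝ) : ℂ) *
              fockFQ NA m (fun i => (d i : ℕ)) (fun k => f (Fin.castAdd NB k)) *
              fockFQ NB m (fun i => n i - (d i : ℕ)) (fun k => f (Fin.natAdd NA k))
            else 0 := by
  intro f
  simp only [split_summand_eq_ite f]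
  by_cases h : occ f = n
  · let d₀ : ∀ i : Fin m, Fin (n i + 1) := fun i =>
      ⟨occ (fun k => f (Fin.castAdd NB k)) i,
        Nat.lt_succ_of_le (h ▸ occ_castAdd_apply_le f i)⟩
    have hd₀ : ∀ d : ∀ i : Fin m, Fin (n i + 1),
        (occ (fun k => f (Fin.castAdd NB k)) = fun i => (d i : ℕ)) ↔ d₀ = d := by
      simp [funext_iff, Fin.ext_iff, d₀]
    simp only [h, true_and, hd₀, Finset.sum_ite_eq, Finset.mem_univ, if_true, mul_one]
    simp [fockFQ, h]
  · simp [fockFQ, h]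

/-- splitting the `N = N_A + N_B` particles of the Fock state `|n⟩•` into
the first `N_A` and the remaining `N_B` tensor factors gives the expansion
`|n⟩• = C(N;n)^{−1/2} Σ_{n_A ≤ n, Σn_A = N_A} C(N_A;n_A)^{1/2} C(N_B;n−n_A)^{1/2}
|n_A⟩• ⊗ |n−n_A⟩•`. -/
theorem stmt19 (m NA NB : ℕ) (n : Fin m → ℕ) (hn : ∑ i, n i = NA + NB) :
    ∀ f : Fin (NA + NB) → Fin m,
      fockFQ (NA + NB) m n f
        = ((Real.sqrt (((Nat.multinomial Finset.univ n : ℕ) : ℝ))⁻¹ : ℝ) : ℂ) *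
          ∑ d : (∀ i : Fin m, Fin (n i + 1)),
            if (∑ i, ((d i : ℕ))) = NA then
              ((Real.sqrt ((Nat.multinomial Finset.univ (fun i => (d i : ℕ)) : ℕ) : ℝ) : ℝ) : ℂ) *
              ((Real.sqrt ((Nat.multinomial Finset.univ (fun i => n i - (d i : ℕ)) : ℕ) : ℝ) : ℝ) : ℂ) *
              fockFQ NA m (fun i => (d i : ℕ)) (fun k => f (Fin.castAdd NB k)) *
              fockFQ NB m (fun i => n i - (d i : ℕ)) (fun k => f (Fin.natAdd NA k))
            else 0 :=
  stmt19_general m NA NB n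
end
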